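/- arXiv:2206.10660 — 8 statements merged into one kernel-verified Lean document; each statement's English description precedes it below -/
import Mathlib

section
/- Consider the population of three individuals with healthy-probabilities q1=q2=1/2, q3=1 and utilities u1=u2=u3=1, with testing budget B=2 and no pool size constraint. The overlapping testing regime T*=({1,3},{2,3}) achieves expected welfare 7/4, while every non-overlapping testing regime with two tests achieves expected welfare at most 3/2. Hence the gain of overlaps for B=2 is at least 7/6. -/
open Finset

/-- Probability of a health realization `ω` (true = healthy) under independent
healthy-probabilities `q`. -/
noncomputable def healthProb {n : ℕ} (q : Fin n → ℝ) (ω : Fin n → Bool) : ℝ :=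
  ∏ i, if ω i then q i else 1 - q i

/-- Probability that individual `i` lies in at least one negative test of the regime `T`. -/
noncomputable def inNegProb {n B : ℕ} (q : Fin n → ℝ) (T : Fin B → Finset (Fin n))
    (i : Fin n) : ℝ :=
  ∑ ω : Fin n → Bool,
    if ∃ j, i ∈ T j ∧ ∀ k ∈ T j, ω k = true then healthProb q ω else 0

/-- Expected welfare of a (possibly overlapping) testing regime `T`. -/
noncomputable def welfare {n B : ℕ} (q u : Fin n → ℝ) (T : Fin B → Finset (Fin n)) : ℝ :=
  ∑ i, u i * inNegProb q T i

/-- Stand-alone expected welfare of a single pooled test `t`. -/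
noncomputable def testWelfare {n : ℕ} (q u : Fin n → ℝ) (t : Finset (Fin n)) : ℝ :=
  (∏ i ∈ t, q i) * ∑ i ∈ t, u i

/-- Welfare of a non-overlapping testing regime, as a sum of stand-alone test welfares. -/
noncomputable def noWelfare {n B : ℕ} (q u : Fin n → ℝ) (T : Fin B → Finset (Fin n)) : ℝ :=
  ∑ j, testWelfare q u (T j)

/-- Probability that test `T j` is pivotal for individual `i`: `i ∈ T j`, test `T j` is
negative, and every earlier test containing `i` is positive. -/
noncomputable def pivotalProb {n B : ℕ} (q : Fin n → ℝ) (T : Fin B → Finset (Fin n))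
    (i : Fin n) (j : Fin B) : ℝ :=
  ∑ ω : Fin n → Bool,
    if i ∈ T j ∧ (∀ k ∈ T j, ω k = true) ∧
        (∀ j' : Fin B, j' < j → i ∈ T j' → ∃ k ∈ T j', ω k = false)
      then healthProb q ω else 0

/-! For two tests `s, t`, independence gives `P(all of s healthy) = ∏ k ∈ s, q k`, and
inclusion–exclusion over the two events "all of `s` healthy", "all of `t` healthy" yields
`welfare = testWelfare s + testWelfare t - (∏ k ∈ s ∪ t, q k) * ∑ i ∈ s ∩ t, u i`.
For `T*` this is `1 + 1 - 1/4`; for disjoint tests the correction vanishes, and then a test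
avoiding the sure-healthy individual is worth at most `1/2`, any other test at most `1`. -/

lemma sum_healthProb_of_forall_mem {n : ℕ} (q : Fin n → ℝ) (s : Finset (Fin n)) :
    ∑ ω : Fin n → Bool, (if ∀ k ∈ s, ω k = true then healthProb q ω else 0) = ∏ k ∈ s, q k := by
  -- Folding the indicator into the product lets the sum over `ω` factor coordinatewise.
  have hfactor : ∀ ω : Fin n → Bool,
      (if ∀ k ∈ s, ω k = true then healthProb q ω else 0) =
        ∏ i, (if ω i then q i else if i ∈ s then 0 else 1 - q i) := by
    intro ω
    split_ifs with hs
    · refine prod_congr rfl fun i _ => ?_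
      cases hi : ω i
      · simp [mt (hs i) (by simp [hi])]
      · simp
    · push Not at hs
      obtain ⟨k, hks, hk⟩ := hs
      exact (prod_eq_zero (mem_univ k) (by simp [hk, hks])).symm
  simp_rw [hfactor]
  rw [← Fintype.prod_sum (κ := fun _ => Bool)
    (fun i b => if b then q i else if i ∈ s then 0 else 1 - q i), ← Fintype.prod_ite_mem s]
  refine prod_congr rfl fun i _ => ?_
  split_ifs <;> simp [*]

lemma inNegProb_pair {n : ℕ} (q : Fin n → ℝ) (s t : Finset (Fin n)) (i : Fin n) :
    inNegProb q ![s, t] i =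
      (if i ∈ s then ∏ k ∈ s, q k else 0) + (if i ∈ t then ∏ k ∈ t, q k else 0) -
        (if i ∈ s ∩ t then ∏ k ∈ s ∪ t, q k else 0) := by
  have hω : ∀ ω : Fin n → Bool,
      (if ∃ j, i ∈ ![s, t] j ∧ ∀ k ∈ ![s, t] j, ω k = true then healthProb q ω else 0) =
        (if i ∈ s then if ∀ k ∈ s, ω k = true then healthProb q ω else 0 else 0) +
          (if i ∈ t then if ∀ k ∈ t, ω k = true then healthProb q ω else 0 else 0) -
          (if i ∈ s ∩ t then if ∀ k ∈ s ∪ t, ω k = true then healthProb q ω else 0 else 0) := by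
    intro ω
    simp only [Fin.exists_fin_two, Matrix.cons_val_zero, Matrix.cons_val_one, mem_inter,
      forall_mem_union]
    split_ifs <;> simp_all
  simp only [inNegProb, hω, sum_sub_distrib, sum_add_distrib, sum_ite_irrel, sum_const_zero,
    sum_healthProb_of_forall_mem]

lemma welfare_pair {n : ℕ} (q u : Fin n → ℝ) (s t : Finset (Fin n)) :
    welfare q u ![s, t] =
      testWelfare q u s + testWelfare q u t - (∏ k ∈ s ∪ t, q k) * ∑ i ∈ s ∩ t, u i := by
  simp only [welfare, inNegProb_pair, mul_sub, mul_add, sum_sub_distrib, sum_add_distrib,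
    mul_ite, mul_zero, Fintype.sum_ite_mem, ← sum_mul, testWelfare, mul_comm]

lemma welfare_pair_of_disjoint {n : ℕ} (q u : Fin n → ℝ) {s t : Finset (Fin n)}
    (hst : Disjoint s t) : welfare q u ![s, t] = testWelfare q u s + testWelfare q u t := by
  simp [welfare_pair, disjoint_iff_inter_eq_empty.mp hst]

lemma testWelfare_example_le (t : Finset (Fin 3)) :
    testWelfare ![1 / 2, 1 / 2, 1] ![1, 1, 1] t ≤ if 2 ∈ t then 1 else 1 / 2 := by
  have hcases : ∀ s : Finset (Fin 3), s = ∅ ∨ s = {0} ∨ s = {1} ∨ s = {2} ∨ s = {0, 1} ∨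
      s = {0, 2} ∨ s = {1, 2} ∨ s = {0, 1, 2} := by decide
  rcases hcases t with rfl | rfl | rfl | rfl | rfl | rfl | rfl | rfl <;>
    simp +decide [testWelfare] <;> norm_num

lemma testWelfare_example_add_le {s t : Finset (Fin 3)} (hst : Disjoint s t) :
    testWelfare ![1 / 2, 1 / 2, 1] ![1, 1, 1] s + testWelfare ![1 / 2, 1 / 2, 1] ![1, 1, 1] t
      ≤ 3 / 2 := by
  have hs := testWelfare_example_le s
  have ht := testWelfare_example_le t
  have h2 : 2 ∉ s ∨ 2 ∉ t := by
    by_contra! h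
    exact disjoint_left.mp hst h.1 h.2
  rcases h2 with h2 | h2 <;> split_ifs at hs ht <;> linarith

/-- The three-person instance with healthy-probabilities `q₁ = q₂ = 1/2`, `q₃ = 1` and
unit utilities: the overlapping regime `({1,3}, {2,3})` achieves welfare `7/4`, every
non-overlapping two-test regime achieves welfare at most `3/2`, and hence every
non-overlapping regime is beaten by at least a factor `7/6`, so `gain(2) ≥ 7/6`. -/
theorem stmt0 :
    let q : Fin 3 → ℝ := ![1 / 2, 1 / 2, 1]
    let u : Fin 3 → ℝ := ![1, 1, 1]
    let Tstar : Fin 2 → Finset (Fin 3) := ![{0, 2}, {1, 2}]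
    welfare q u Tstar = 7 / 4 ∧
      (∀ T : Fin 2 → Finset (Fin 3),
        (∀ j k : Fin 2, j ≠ k → Disjoint (T j) (T k)) → welfare q u T ≤ 3 / 2) ∧
      (∀ T : Fin 2 → Finset (Fin 3),
        (∀ j k : Fin 2, j ≠ k → Disjoint (T j) (T k)) →
          (7 / 6 : ℝ) * welfare q u T ≤ welfare q u Tstar) := by
  intro q u Tstar
  have hstar : welfare q u Tstar = 7 / 4 := by
    rw [welfare_pair, show ({0, 2} ∩ {1, 2} : Finset (Fin 3)) = {2} by decide]
    simp +decide [testWelfare, q, u]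
    norm_num
  have hdisj : ∀ T : Fin 2 → Finset (Fin 3),
      (∀ j k : Fin 2, j ≠ k → Disjoint (T j) (T k)) → welfare q u T ≤ 3 / 2 := by
    intro T hT
    have hT_eq : T = ![T 0, T 1] := by
      ext1 j
      fin_cases j <;> rfl
    rw [hT_eq, welfare_pair_of_disjoint _ _ (hT 0 1 (by decide))]
    exact testWelfare_example_add_le (hT 0 1 (by decide))
  exact ⟨hstar, hdisj, fun T hT => by linarith [hdisj T hT]⟩
end

section
/- Let T* = (t*_1, ..., t*_B) be a welfare-optimal non-overlapping testing regime and let α ∈ (0,1). For any test t*_j and any subset S ⊊ t*_j, if prod_{i in S} q_i < α then prod_{i in t*_j \ S} q_i ≥ 1 − α. -/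
open Finset

/-
Replacing a test of an optimal regime by a subset of itself keeps the regime feasible, so no
subset of an optimal test has larger stand-alone welfare. Comparing `T j` with both halves
`S` and `C = T j \ S`, and writing `U_X` for the utility sum over `X`, gives
`U_C ≤ q_S (U_S + U_C)` and `U_S ≤ q_C (U_S + U_C)`; adding them yields `1 ≤ q_S + q_C`.
-/

lemma noWelfare_update {n B : ℕ} (q u : Fin n → ℝ) (T : Fin B → Finset (Fin n))
    (j : Fin B) (t : Finset (Fin n)) :
    noWelfare q u (Function.update T j t)
      = noWelfare q u T - testWelfare q u (T j) + testWelfare q u t := by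
  have h : (fun k => testWelfare q u (Function.update T j t k))
      = Function.update (fun k => testWelfare q u (T k)) j (testWelfare q u t) := by
    funext k
    by_cases hk : k = j
    · subst hk; simp
    · simp [hk]
  rw [noWelfare, noWelfare, h, sum_update_of_mem (mem_univ j), sdiff_singleton_eq_erase,
    ← add_sum_erase _ _ (mem_univ j)]
  ring

lemma disjoint_update_of_subset {n B : ℕ} {T : Fin B → Finset (Fin n)}
    (hdisj : ∀ j k, j ≠ k → Disjoint (T j) (T k)) {j : Fin B} {t : Finset (Fin n)}
    (ht : t ⊆ T j) :
    ∀ k l, k ≠ l → Disjoint (Function.update T j t k) (Function.update T j t l) := by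
  have hsub : ∀ k, Function.update T j t k ⊆ T k := by
    intro k
    by_cases hk : k = j
    · subst hk; simpa using ht
    · simp [hk]
  exact fun k l hkl => (hdisj k l hkl).mono (hsub k) (hsub l)

lemma card_update_le_of_subset {n B G : ℕ} {T : Fin B → Finset (Fin n)}
    (hsize : ∀ j, (T j).card ≤ G) {j : Fin B} {t : Finset (Fin n)} (ht : t ⊆ T j) :
    ∀ k, (Function.update T j t k).card ≤ G := by
  intro k
  by_cases hk : k = j
  · subst hk; simpa using (card_le_card ht).trans (hsize k)
  · simpa [hk] using hsize k

lemma testWelfare_le_of_subset_of_optimal {n B G : ℕ} (q u : Fin n → ℝ)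
    (T : Fin B → Finset (Fin n))
    (hdisj : ∀ j k, j ≠ k → Disjoint (T j) (T k)) (hsize : ∀ j, (T j).card ≤ G)
    (hopt : ∀ T' : Fin B → Finset (Fin n),
      (∀ j k, j ≠ k → Disjoint (T' j) (T' k)) → (∀ j, (T' j).card ≤ G) →
        noWelfare q u T' ≤ noWelfare q u T)
    {j : Fin B} {t : Finset (Fin n)} (ht : t ⊆ T j) :
    testWelfare q u t ≤ testWelfare q u (T j) := by
  have h := hopt _ (disjoint_update_of_subset hdisj ht) (card_update_le_of_subset hsize ht)
  rw [noWelfare_update] at h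
  linarith

lemma one_le_prod_add_prod_sdiff {n : ℕ} {q u : Fin n → ℝ} {s t : Finset (Fin n)}
    (hst : s ⊆ t) (hq : ∀ i ∈ t, 0 < q i) (hu : 0 < ∑ i ∈ t, u i)
    (hs : testWelfare q u s ≤ testWelfare q u t)
    (hts : testWelfare q u (t \ s) ≤ testWelfare q u t) :
    1 ≤ ∏ i ∈ s, q i + ∏ i ∈ t \ s, q i := by
  have hqs : 0 < ∏ i ∈ s, q i := prod_pos fun i hi => hq i (hst hi)
  have hqts : 0 < ∏ i ∈ t \ s, q i := prod_pos fun i hi => hq i (mem_sdiff.1 hi).1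
  rw [testWelfare, testWelfare, ← prod_sdiff hst] at hs hts
  have hs' : ∑ i ∈ s, u i ≤ (∏ i ∈ t \ s, q i) * ∑ i ∈ t, u i :=
    le_of_mul_le_mul_left (by linarith) hqs
  have hts' : ∑ i ∈ t \ s, u i ≤ (∏ i ∈ s, q i) * ∑ i ∈ t, u i :=
    le_of_mul_le_mul_left (by linarith) hqts
  have hsum : ∑ i ∈ t, u i ≤ (∏ i ∈ s, q i + ∏ i ∈ t \ s, q i) * ∑ i ∈ t, u i := by
    linarith [sum_sdiff hst (f := u)]
  exact le_of_mul_le_mul_right (by linarith) hu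

theorem stmt2_general {n B G : ℕ} (q u : Fin n → ℝ)
    (hq : ∀ i, 0 < q i ∧ q i ≤ 1) (hu : ∀ i, 0 < u i)
    (T : Fin B → Finset (Fin n))
    (hdisj : ∀ j k, j ≠ k → Disjoint (T j) (T k)) (hsize : ∀ j, (T j).card ≤ G)
    (hopt : ∀ T' : Fin B → Finset (Fin n),
      (∀ j k, j ≠ k → Disjoint (T' j) (T' k)) → (∀ j, (T' j).card ≤ G) →
        noWelfare q u T' ≤ noWelfare q u T)
    (α : ℝ)
    (j : Fin B) (S : Finset (Fin n)) (hS : S ⊂ T j)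
    (hqS : ∏ i ∈ S, q i < α) :
    1 - α ≤ ∏ i ∈ T j \ S, q i := by
  obtain ⟨x, hxT, -⟩ := exists_of_ssubset hS
  have hu_pos : 0 < ∑ i ∈ T j, u i := sum_pos (fun i _ => hu i) ⟨x, hxT⟩
  have h := one_le_prod_add_prod_sdiff hS.subset (fun i _ => (hq i).1) hu_pos
    (testWelfare_le_of_subset_of_optimal q u T hdisj hsize hopt hS.subset)
    (testWelfare_le_of_subset_of_optimal q u T hdisj hsize hopt sdiff_subset)
  linarith

/-- If `T` is a welfare-optimal non-overlapping testing regime and `α ∈ (0,1)`, then for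
any test `T j` and any proper subset `S ⊊ T j`, if `∏ i ∈ S, q i < α` then
`∏ i ∈ T j \ S, q i ≥ 1 - α`. -/
theorem stmt2 {n B G : ℕ} (q u : Fin n → ℝ)
    (hq : ∀ i, 0 < q i ∧ q i ≤ 1) (hu : ∀ i, 0 < u i)
    (T : Fin B → Finset (Fin n))
    (hdisj : ∀ j k, j ≠ k → Disjoint (T j) (T k)) (hsize : ∀ j, (T j).card ≤ G)
    (hopt : ∀ T' : Fin B → Finset (Fin n),
      (∀ j k, j ≠ k → Disjoint (T' j) (T' k)) → (∀ j, (T' j).card ≤ G) →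
        noWelfare q u T' ≤ noWelfare q u T)
    (α : ℝ) (hα : 0 < α ∧ α < 1)
    (j : Fin B) (S : Finset (Fin n)) (hS : S ⊂ T j)
    (hqS : ∏ i ∈ S, q i < α) :
    1 - α ≤ ∏ i ∈ T j \ S, q i :=
  stmt2_general q u hq hu T hdisj hsize hopt α j S hS hqS
end

section
/- Let t* be a welfare-optimal single pooled test. If some individual i' ∈ t* has q_{i'} < 1/2, then prod_{i ∈ t* \ {i'}} q_i ≥ 1/2. More generally, a single optimal test contains at most one individual with healthy-probability strictly below 1/2. -/
open Finset

/-! Let `t*` be optimal, `i' ∈ t*`, and write `P`, `S` for the product of the `q`'s and the sum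
of the `u`'s over `t* \ {i'}`. Optimality against the pool `t* \ {i'}` gives `S ≤ q_{i'} (u_{i'} + S)`,
and against the singleton `{i'}` it gives `u_{i'} ≤ P (u_{i'} + S)`. Adding the two yields
`1 ≤ q_{i'} + P`, so `q_{i'} < 1/2` forces `P > 1/2`. Two members below `1/2` are then impossible,
since `P` would be at most the healthy-probability of the other one. -/

lemma testWelfare_eq_of_mem {n : ℕ} (q u : Fin n → ℝ) {t : Finset (Fin n)} {i : Fin n}
    (hi : i ∈ t) :
    testWelfare q u t = q i * (∏ j ∈ t.erase i, q j) * (u i + ∑ j ∈ t.erase i, u j) := by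
  rw [testWelfare, ← mul_prod_erase t q hi, ← add_sum_erase t u hi]

lemma one_le_add_of_le_split {a P v S : ℝ} (ha : 0 < a) (hP : 0 < P) (hvS : 0 < v + S)
    (h_rest : P * S ≤ a * P * (v + S)) (h_single : a * v ≤ a * P * (v + S)) : 1 ≤ a + P := by
  have hS : S ≤ a * (v + S) := le_of_mul_le_mul_left (by linarith) hP
  have hv : v ≤ P * (v + S) := le_of_mul_le_mul_left (by linarith) ha
  exact le_of_mul_le_mul_right (by linarith) hvS

lemma one_le_add_prod_erase_of_testWelfare_le {n : ℕ} {q u : Fin n → ℝ} {t : Finset (Fin n)}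
    {i : Fin n} (hq : ∀ j ∈ t, 0 < q j) (hu : ∀ j ∈ t, 0 ≤ u j) (hui : 0 < u i) (hi : i ∈ t)
    (h_erase : testWelfare q u (t.erase i) ≤ testWelfare q u t)
    (h_single : testWelfare q u {i} ≤ testWelfare q u t) :
    1 ≤ q i + ∏ j ∈ t.erase i, q j := by
  rw [testWelfare_eq_of_mem q u hi] at h_erase h_single
  rw [testWelfare] at h_erase
  rw [testWelfare, prod_singleton, sum_singleton] at h_single
  refine one_le_add_of_le_split (hq i hi) (prod_pos fun j hj => hq j (mem_of_mem_erase hj)) ?_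
    h_erase h_single
  exact add_pos_of_pos_of_nonneg hui (sum_nonneg fun j hj => hu j (mem_of_mem_erase hj))

/-- A welfare-optimal single pooled test contains at most one individual with
healthy-probability below 1/2, and if it contains such an individual `i'` then the
product of the healthy-probabilities of the remaining members is at least 1/2. -/
theorem stmt3 {n G : ℕ} (q u : Fin n → ℝ)
    (hq : ∀ i, 0 < q i ∧ q i ≤ 1) (hu : ∀ i, 0 < u i)
    (tstar : Finset (Fin n)) (hsize : tstar.card ≤ G)
    (hopt : ∀ t : Finset (Fin n), t.card ≤ G → testWelfare q u t ≤ testWelfare q u tstar) :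
    (∀ i' ∈ tstar, q i' < 1 / 2 → (1 : ℝ) / 2 ≤ ∏ i ∈ tstar.erase i', q i) ∧
      (tstar.filter fun i => q i < 1 / 2).card ≤ 1 := by
  have half_lt_prod : ∀ i' ∈ tstar, q i' < 1 / 2 → (1 : ℝ) / 2 < ∏ i ∈ tstar.erase i', q i := by
    intro i' hi' hqi'
    have h_single : ({i'} : Finset (Fin n)).card ≤ G :=
      (card_singleton i').trans_le ((card_pos.mpr ⟨i', hi'⟩).trans_le hsize)
    have := one_le_add_prod_erase_of_testWelfare_le (fun j _ => (hq j).1) (fun j _ => (hu j).le)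
      (hu i') hi' (hopt _ ((card_erase_le).trans hsize)) (hopt _ h_single)
    linarith
  refine ⟨fun i' hi' hqi' => (half_lt_prod i' hi' hqi').le, card_le_one.mpr ?_⟩
  intro i hi j hj
  simp only [mem_filter] at hi hj
  by_contra hij
  have hj_erase : j ∈ tstar.erase i := mem_erase.mpr ⟨Ne.symm hij, hj.1⟩
  have h_le : ∏ k ∈ tstar.erase i, q k ≤ q j := by
    simpa using prod_le_prod_of_subset_of_le_one (singleton_subset_iff.mpr hj_erase)
      (fun k _ => (hq k).1.le) (fun k _ _ => (hq k).2)
  linarith [half_lt_prod i hi.1 hi.2, hj.2]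
end

section
/- Let t be a pooled test such that (a) removing any single individual i' from t does not increase welfare, i.e., u(t \ {i'}) ≤ u(t) for all i' ∈ t, (b) the singleton test {i'} does not beat t, i.e., q_{i'} u_{i'} ≤ u(t) for all i' ∈ t, and (c) every proper subset S ⊊ t with q_S < 1/2 satisfies q_{t\S} ≥ 1/2. Then u(t) = q_t Σ_{i∈t} u_i ≥ (1/4) Σ_{i∈t} q_i u_i. -/
open Finset


/-!
Since dropping member `i` does not raise the welfare, `(1 - q i) * U ≤ u i` with `U = ∑ u`.
Summing shows `∑ (1 - q i) ≤ 1`, and weighting by `1 - q i` gives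
`∑ q i * u i ≤ (1 - ∑ (1 - q i) ^ 2) * U`. It remains to see that `1 - ∑ x i ^ 2 ≤ 4 * ∏ (1 - x i)`
whenever `x i ∈ [0, 1]` and `∑ x i ≤ 1`: by convexity `1 - x ≥ (1/2) ^ (2 * x)` on `[0, 1/2]`,
so the product is at least `1/4` if all `x i ≤ 1/2`, and otherwise exactly one `x j` exceeds `1/2`
and the other factors multiply to at least `1/2 ≥ (1 + x j) / 4`.
-/
theorem half_rpow_two_mul_le_one_sub {x : ℝ} (hx₀ : 0 ≤ x) (hx : x ≤ 1 / 2) :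
    (1 / 2 : ℝ) ^ (2 * x) ≤ 1 - x := by
  have h := (convexOn_rpow_left (b := 1 / 2) (by norm_num)).2 (Set.mem_univ 0)
    (Set.mem_univ 1) (by linarith : (0 : ℝ) ≤ 1 - 2 * x) (by linarith : (0 : ℝ) ≤ 2 * x)
    (by ring)
  simp only [smul_eq_mul, mul_zero, mul_one, zero_add, Real.rpow_zero, Real.rpow_one] at h
  linarith

theorem half_rpow_two_mul_sum_le_prod_one_sub {ι : Type*} {s : Finset ι} {x : ι → ℝ}
    (hx : ∀ i ∈ s, 0 ≤ x i ∧ x i ≤ 1 / 2) :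
    (1 / 2 : ℝ) ^ (2 * ∑ i ∈ s, x i) ≤ ∏ i ∈ s, (1 - x i) := by
  rw [mul_sum, Real.rpow_sum_of_pos (by norm_num)]
  exact prod_le_prod (fun _ _ ↦ by positivity)
    fun i hi ↦ half_rpow_two_mul_le_one_sub (hx i hi).1 (hx i hi).2

theorem le_prod_one_sub_of_sum_le {ι : Type*} {s : Finset ι} {x : ι → ℝ}
    (hx : ∀ i ∈ s, 0 ≤ x i ∧ x i ≤ 1 / 2) {c : ℝ} (hs : ∑ i ∈ s, x i ≤ c) :
    (1 / 2 : ℝ) ^ (2 * c) ≤ ∏ i ∈ s, (1 - x i) :=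
  (Real.rpow_le_rpow_of_exponent_ge (by norm_num) (by norm_num) (by linarith)).trans
    (half_rpow_two_mul_sum_le_prod_one_sub hx)

theorem one_sub_sum_sq_le_four_mul_prod_one_sub {ι : Type*} [DecidableEq ι] {s : Finset ι}
    {x : ι → ℝ} (hx : ∀ i ∈ s, 0 ≤ x i ∧ x i ≤ 1) (hs : ∑ i ∈ s, x i ≤ 1) :
    1 - ∑ i ∈ s, x i ^ 2 ≤ 4 * ∏ i ∈ s, (1 - x i) := by
  have hsq : 0 ≤ ∑ i ∈ s, x i ^ 2 := sum_nonneg fun i _ ↦ sq_nonneg (x i)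
  by_cases hlarge : ∃ j ∈ s, 1 / 2 < x j
  · obtain ⟨j, hj, hxj⟩ := hlarge
    have hrest : ∑ i ∈ s.erase j, x i ≤ 1 / 2 := by
      have := sum_erase_add s x hj
      linarith
    have hsmall : ∀ i ∈ s.erase j, 0 ≤ x i ∧ x i ≤ 1 / 2 := fun i hi ↦
      ⟨(hx i (mem_of_mem_erase hi)).1,
        (single_le_sum (fun k hk ↦ (hx k (mem_of_mem_erase hk)).1) hi).trans hrest⟩
    have hhalf : 1 / 2 ≤ ∏ i ∈ s.erase j, (1 - x i) := by
      simpa using le_prod_one_sub_of_sum_le hsmall hrest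
    have hxj_sq : x j ^ 2 ≤ ∑ i ∈ s, x i ^ 2 := single_le_sum (fun i _ ↦ sq_nonneg (x i)) hj
    rw [← mul_prod_erase s _ hj]
    nlinarith [(hx j hj).2]
  · push Not at hlarge
    have hquarter : 1 / 4 ≤ ∏ i ∈ s, (1 - x i) := by
      have := le_prod_one_sub_of_sum_le (fun i hi ↦ ⟨(hx i hi).1, hlarge i hi⟩) hs
      norm_num at this
      linarith
    linarith

theorem one_sub_mul_sum_le_of_testWelfare_erase_le {n : ℕ} {q u : Fin n → ℝ}
    {t : Finset (Fin n)} {i : Fin n} (hi : i ∈ t) (hpos : 0 < ∏ j ∈ t.erase i, q j)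
    (h : testWelfare q u (t.erase i) ≤ testWelfare q u t) :
    (1 - q i) * ∑ j ∈ t, u j ≤ u i := by
  rw [testWelfare, testWelfare, ← mul_prod_erase t q hi, ← add_sum_erase t u hi] at h
  rw [← add_sum_erase t u hi]
  have : ∑ j ∈ t.erase i, u j ≤ q i * (u i + ∑ j ∈ t.erase i, u j) :=
    le_of_mul_le_mul_left (by linarith) hpos
  linarith

theorem sum_mul_le_one_sub_sum_sq_mul {ι : Type*} {s : Finset ι} {q u : ι → ℝ}
    (hq : ∀ i ∈ s, q i ≤ 1) (hdrop : ∀ i ∈ s, (1 - q i) * ∑ j ∈ s, u j ≤ u i) :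
    ∑ i ∈ s, q i * u i ≤ (1 - ∑ i ∈ s, (1 - q i) ^ 2) * ∑ j ∈ s, u j := by
  have hsplit : ∑ i ∈ s, q i * u i = ∑ j ∈ s, u j - ∑ i ∈ s, (1 - q i) * u i := by
    rw [← sum_sub_distrib]
    exact sum_congr rfl fun i _ ↦ by ring
  have hlower : ∑ i ∈ s, (1 - q i) ^ 2 * ∑ j ∈ s, u j ≤ ∑ i ∈ s, (1 - q i) * u i :=
    sum_le_sum fun i hi ↦ by
      rw [sq, mul_assoc]
      exact mul_le_mul_of_nonneg_left (hdrop i hi) (by linarith [hq i hi])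
  rw [← sum_mul] at hlower
  linarith

theorem stmt4_general {n : ℕ} (q u : Fin n → ℝ)
    (hq : ∀ i, 0 ≤ q i ∧ q i ≤ 1) (hu : ∀ i, 0 ≤ u i)
    (t : Finset (Fin n))
    (ha : ∀ i' ∈ t, testWelfare q u (t.erase i') ≤ testWelfare q u t)
    (hb : ∀ i' ∈ t, q i' * u i' ≤ testWelfare q u t) :
    (1 / 4 : ℝ) * ∑ i ∈ t, q i * u i ≤ testWelfare q u t := by
  set U := ∑ i ∈ t, u i
  have hU : 0 ≤ U := sum_nonneg fun i _ ↦ hu i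
  rcases (prod_nonneg fun i (_ : i ∈ t) ↦ (hq i).1).eq_or_lt with hP | hP
  · have hW : testWelfare q u t = 0 := by rw [testWelfare, ← hP, zero_mul]
    have := sum_nonpos fun i hi ↦ (hb i hi).trans_eq hW
    linarith
  rcases hU.eq_or_lt with hU₀ | hU₀
  · have : ∑ i ∈ t, q i * u i ≤ U :=
      sum_le_sum fun i _ ↦ mul_le_of_le_one_left (hu i) (hq i).2
    have : 0 ≤ testWelfare q u t := mul_nonneg hP.le hU
    linarith
  have hdrop : ∀ i ∈ t, (1 - q i) * U ≤ u i := fun i hi ↦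
    one_sub_mul_sum_le_of_testWelfare_erase_le hi
      (prod_pos fun j hj ↦ (hq j).1.lt_of_ne'
        (prod_ne_zero_iff.1 hP.ne' j (mem_of_mem_erase hj))) (ha i hi)
  have hsum : ∑ i ∈ t, (1 - q i) ≤ 1 := by
    have : (∑ i ∈ t, (1 - q i)) * U ≤ 1 * U := by
      rw [sum_mul, one_mul]; exact sum_le_sum hdrop
    exact le_of_mul_le_mul_right this hU₀
  have hkey := one_sub_sum_sq_le_four_mul_prod_one_sub (s := t) (x := fun i ↦ 1 - q i)
    (fun i _ ↦ ⟨by linarith [(hq i).2], by linarith [(hq i).1]⟩) hsum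
  simp only [sub_sub_cancel] at hkey
  calc (1 / 4 : ℝ) * ∑ i ∈ t, q i * u i
      ≤ 1 / 4 * ((1 - ∑ i ∈ t, (1 - q i) ^ 2) * U) := by
        gcongr; exact sum_mul_le_one_sub_sum_sq_mul (fun i _ ↦ (hq i).2) hdrop
    _ ≤ testWelfare q u t := by
        rw [testWelfare]; linarith [mul_le_mul_of_nonneg_right hkey hU]

/-- If a test `t` satisfies: (a) removing any single member does not increase welfare,
(b) no singleton test of a member beats `t`, and (c) every proper subset `S ⊊ t` with
`q_S < 1/2` has `q_{t \ S} ≥ 1/2`, then `u(t) ≥ (1/4) ∑_{i ∈ t} q_i u_i`. -/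
theorem stmt4 {n : ℕ} (q u : Fin n → ℝ)
    (hq : ∀ i, 0 ≤ q i ∧ q i ≤ 1) (hu : ∀ i, 0 ≤ u i)
    (t : Finset (Fin n))
    (ha : ∀ i' ∈ t, testWelfare q u (t.erase i') ≤ testWelfare q u t)
    (hb : ∀ i' ∈ t, q i' * u i' ≤ testWelfare q u t)
    (hc : ∀ S : Finset (Fin n), S ⊂ t → (∏ i ∈ S, q i) < 1 / 2 →
      (1 : ℝ) / 2 ≤ ∏ i ∈ t \ S, q i) :
    (1 / 4 : ℝ) * ∑ i ∈ t, q i * u i ≤ testWelfare q u t :=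
  stmt4_general q u hq hu t ha hb
end

section
/- Suppose T = (t_1, ..., t_B) is a non-overlapping testing regime in which every test t_j satisfies u(t_j) = q_{t_j} Σ_{i∈t_j} u_i ≥ (1/4) Σ_{i∈t_j} q_i u_i, and suppose additionally that for every non-overlapping regime T' whose tests consist only of individuals not pooled by T, u(T) ≥ (1−ε)·u(T'). Then u(T) ≥ ((1−ε)/5) · u(T*) for any optimal non-overlapping testing regime T*. -/
open Finset

/-- If every test of a non-overlapping regime `T` captures at least a quarter of the
maximal utility `∑_{i ∈ t_j} q_i u_i` of its members, and `T` was built greedily (its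
welfare is at least `(1 - ε)` times that of any non-overlapping regime using only
individuals not pooled by `T`), then `T` is a `5/(1-ε)`-approximation of the optimal
non-overlapping regime `T*`. -/
theorem stmt5 {n B G : ℕ} (q u : Fin n → ℝ) (ε : ℝ)
    (hq : ∀ i, 0 ≤ q i ∧ q i ≤ 1) (hu : ∀ i, 0 ≤ u i) (hε : 0 ≤ ε ∧ ε < 1)
    (T : Fin B → Finset (Fin n))
    (hdisj : ∀ j k, j ≠ k → Disjoint (T j) (T k)) (hsize : ∀ j, (T j).card ≤ G)
    (hquarter : ∀ j, (1 / 4 : ℝ) * ∑ i ∈ T j, q i * u i ≤ testWelfare q u (T j))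
    (hgreedy : ∀ T' : Fin B → Finset (Fin n),
      (∀ j k, j ≠ k → Disjoint (T' j) (T' k)) → (∀ j, (T' j).card ≤ G) →
        (∀ j, ∀ i ∈ T' j, ∀ j₂, i ∉ T j₂) →
          (1 - ε) * noWelfare q u T' ≤ noWelfare q u T)
    (Tstar : Fin B → Finset (Fin n))
    (hdisj' : ∀ j k, j ≠ k → Disjoint (Tstar j) (Tstar k))
    (hsize' : ∀ j, (Tstar j).card ≤ G)
    (hopt : ∀ T' : Fin B → Finset (Fin n),
      (∀ j k, j ≠ k → Disjoint (T' j) (T' k)) → (∀ j, (T' j).card ≤ G) →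
        noWelfare q u T' ≤ noWelfare q u Tstar) :
    ((1 - ε) / 5) * noWelfare q u Tstar ≤ noWelfare q u T := by
  classical
  set S : Finset (Fin n) := Finset.univ.biUnion T with hS
  have hf : ∀ i, 0 ≤ q i * u i := fun i => mul_nonneg (hq i).1 (hu i)
  have hprod_nonneg : ∀ (s : Finset (Fin n)), 0 ≤ ∏ i ∈ s, q i :=
    fun s => Finset.prod_nonneg (fun i _ => (hq i).1)
  have hprod_le_one : ∀ (s : Finset (Fin n)), ∏ i ∈ s, q i ≤ 1 :=
    fun s => Finset.prod_le_one (fun i _ => (hq i).1) (fun i _ => (hq i).2)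
  have hsum_nonneg : ∀ (s : Finset (Fin n)), 0 ≤ ∑ i ∈ s, u i :=
    fun s => Finset.sum_nonneg (fun i _ => hu i)
  have hW : 0 ≤ noWelfare q u T := by
    apply Finset.sum_nonneg
    intro j _
    exact mul_nonneg (hprod_nonneg _) (hsum_nonneg _)
  -- Step 1: per-test split for Tstar
  have h1 : ∀ j, testWelfare q u (Tstar j) ≤
      (∑ i ∈ Tstar j ∩ S, q i * u i) + testWelfare q u (Tstar j \ S) := by
    intro j
    set t := Tstar j with ht
    have hsplit : (∑ i ∈ t ∩ S, u i) + ∑ i ∈ t \ S, u i = ∑ i ∈ t, u i :=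
      Finset.sum_inter_add_sum_sdiff t S u
    have e1 : testWelfare q u t
        = (∏ i ∈ t, q i) * (∑ i ∈ t ∩ S, u i) + (∏ i ∈ t, q i) * ∑ i ∈ t \ S, u i := by
      rw [testWelfare, ← hsplit, mul_add]
    rw [e1]
    have hA : (∏ i ∈ t, q i) * (∑ i ∈ t ∩ S, u i) ≤ ∑ i ∈ t ∩ S, q i * u i := by
      rw [Finset.mul_sum]
      apply Finset.sum_le_sum
      intro i hi
      have hit : i ∈ t := Finset.mem_of_mem_inter_left hi
      have hq' : (∏ k ∈ t, q k) ≤ q i := by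
        rw [← Finset.prod_erase_mul t q hit]
        calc (∏ k ∈ t.erase i, q k) * q i ≤ 1 * q i :=
              mul_le_mul_of_nonneg_right (hprod_le_one _) (hq i).1
          _ = q i := one_mul _
      exact mul_le_mul_of_nonneg_right hq' (hu i)
    have hB : (∏ i ∈ t, q i) * (∑ i ∈ t \ S, u i) ≤ testWelfare q u (t \ S) := by
      rw [testWelfare]
      apply mul_le_mul_of_nonneg_right _ (hsum_nonneg _)
      have : (∏ i ∈ t \ (t ∩ S), q i) * ∏ i ∈ t ∩ S, q i = ∏ i ∈ t, q i :=
        Finset.prod_sdiff (Finset.inter_subset_left)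
      rw [Finset.sdiff_inter_self_left] at this
      rw [← this]
      calc (∏ i ∈ t \ S, q i) * ∏ i ∈ t ∩ S, q i
          ≤ (∏ i ∈ t \ S, q i) * 1 :=
            mul_le_mul_of_nonneg_left (hprod_le_one _) (hprod_nonneg _)
        _ = ∏ i ∈ t \ S, q i := mul_one _
    linarith
  -- Step 2: the S-part is at most 4 * noWelfare T
  have h2 : (∑ j, ∑ i ∈ Tstar j ∩ S, q i * u i) ≤ 4 * noWelfare q u T := by
    have h2a : (∑ j, ∑ i ∈ Tstar j ∩ S, q i * u i) ≤ ∑ i ∈ S, q i * u i := by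
      have hdis : ∀ j ∈ (Finset.univ : Finset (Fin B)), ∀ k ∈ (Finset.univ : Finset (Fin B)),
          j ≠ k → Disjoint (Tstar j ∩ S) (Tstar k ∩ S) := by
        intro j _ k _ hjk
        exact Finset.disjoint_of_subset_left Finset.inter_subset_left
          (Finset.disjoint_of_subset_right Finset.inter_subset_left (hdisj' j k hjk))
      rw [← Finset.sum_biUnion hdis]
      apply Finset.sum_le_sum_of_subset_of_nonneg
      · intro i hi
        obtain ⟨j, _, hj⟩ := Finset.mem_biUnion.mp hi
        exact Finset.mem_of_mem_inter_right hj
      · intro i _ _; exact hf i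
    have h2b : (∑ i ∈ S, q i * u i) = ∑ j, ∑ i ∈ T j, q i * u i := by
      rw [hS]
      exact Finset.sum_biUnion (fun j _ k _ hjk => hdisj j k hjk)
    have h2c : (∑ j, ∑ i ∈ T j, q i * u i) ≤ 4 * noWelfare q u T := by
      rw [noWelfare, Finset.mul_sum]
      apply Finset.sum_le_sum
      intro j _
      have := hquarter j
      linarith
    linarith
  -- Step 3: the complement part via the greedy hypothesis
  set T' : Fin B → Finset (Fin n) := fun j => Tstar j \ S with hT'
  have h3 : (1 - ε) * noWelfare q u T' ≤ noWelfare q u T := by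
    apply hgreedy
    · intro j k hjk
      exact Finset.disjoint_of_subset_left Finset.sdiff_subset
        (Finset.disjoint_of_subset_right Finset.sdiff_subset (hdisj' j k hjk))
    · intro j
      exact le_trans (Finset.card_le_card Finset.sdiff_subset) (hsize' j)
    · intro j i hi j₂ hij₂
      have : i ∉ S := (Finset.mem_sdiff.mp hi).2
      exact this (Finset.mem_biUnion.mpr ⟨j₂, Finset.mem_univ _, hij₂⟩)
  -- Combine
  have hmain : noWelfare q u Tstar ≤ 4 * noWelfare q u T + noWelfare q u T' := by
    rw [noWelfare]
    calc (∑ j, testWelfare q u (Tstar j))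
        ≤ ∑ j, ((∑ i ∈ Tstar j ∩ S, q i * u i) + testWelfare q u (Tstar j \ S)) :=
          Finset.sum_le_sum (fun j _ => h1 j)
      _ = (∑ j, ∑ i ∈ Tstar j ∩ S, q i * u i) + noWelfare q u T' := by
          rw [Finset.sum_add_distrib]; rfl
      _ ≤ 4 * noWelfare q u T + noWelfare q u T' := by linarith
  obtain ⟨hε0, hε1⟩ := hε
  have hkey : (1 - ε) * noWelfare q u Tstar ≤ 5 * noWelfare q u T := by
    nlinarith [mul_le_mul_of_nonneg_left hmain (by linarith : (0:ℝ) ≤ 1 - ε)]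
  linarith
end

section
/- For any budget B ≥ 1 and any population instance, the welfare of an optimal (possibly overlapping) testing regime is at most 4 times the welfare of an optimal non-overlapping testing regime; that is, gain(B) ≤ 4. -/
/-!
Randomized rounding of the pivotal probabilities. Call test `j` pivotal for `i` if it is the
first negative test containing `i`, with probability `π i j`; these events partition the event
that `i` earns `u i`, so the welfare is `∑ j, ∑ i ∈ T j, u i * π i j`. Keep each `i`
independently in the single test `j` with probability `π i j / (2 q i)`, and in no test
otherwise (these probabilities sum to at most `1/2` because `∑ j, π i j ≤ q i`). This yields a
non-overlapping regime whose pools lie inside the original ones. As `π k j ≤ ∏ l ∈ T j, q l`,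
the expected number of sick members kept in `T j` is at most half the probability that exactly
one member of `T j` is sick, so once `i` is kept in `j` and healthy, the pool is negative with
probability at least `1/2` (Weierstrass product inequality). Thus the rounded regime has
expected welfare at least a quarter of the original, and some assignment attains this.
-/

open Finset

section Independence

variable {ι κ : Type*} [Fintype ι] [DecidableEq ι] [Fintype κ]

/-- `∑ σ, (∏ i, w i (σ i)) * _` is an expectation over independent coordinates `σ i ∼ w i`. -/
theorem sum_prod_mul_prod_eq_prod_sum (w f : ι → κ → ℝ) (hw : ∀ i, ∑ o, w i o = 1)
    (s : Finset ι) :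
    ∑ σ : ι → κ, (∏ i, w i (σ i)) * ∏ i ∈ s, f i (σ i) = ∏ i ∈ s, ∑ o, w i o * f i o := by
  have hfactor : ∀ i, ∑ o, w i o * (if i ∈ s then f i o else 1)
      = if i ∈ s then ∑ o, w i o * f i o else 1 := by
    intro i
    split_ifs <;> simp [hw]
  simp_rw [← Fintype.prod_ite_mem s, ← prod_mul_distrib]
  rw [← Fintype.prod_sum fun i o ↦ w i o * if i ∈ s then f i o else 1]
  exact prod_congr rfl fun i _ ↦ hfactor i

theorem sum_prod_eq_one (w : ι → κ → ℝ) (hw : ∀ i, ∑ o, w i o = 1) :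
    ∑ σ : ι → κ, ∏ i, w i (σ i) = 1 := by
  simp [← Fintype.prod_sum, hw]

theorem exists_sum_prod_mul_le [Nonempty κ] (w : ι → κ → ℝ) (hw0 : ∀ i o, 0 ≤ w i o)
    (hw1 : ∀ i, ∑ o, w i o = 1) (Φ : (ι → κ) → ℝ) :
    ∃ σ, ∑ σ' : ι → κ, (∏ i, w i (σ' i)) * Φ σ' ≤ Φ σ := by
  obtain ⟨σ, -, hσ⟩ := exists_max_image univ Φ univ_nonempty
  refine ⟨σ, ?_⟩
  calc ∑ σ' : ι → κ, (∏ i, w i (σ' i)) * Φ σ'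
      ≤ ∑ σ' : ι → κ, (∏ i, w i (σ' i)) * Φ σ :=
        sum_le_sum fun σ' _ ↦ mul_le_mul_of_nonneg_left (hσ σ' (mem_univ _))
          (prod_nonneg fun i _ ↦ hw0 i _)
    _ = Φ σ := by rw [← sum_mul, sum_prod_eq_one w hw1, one_mul]

end Independence

theorem sum_mul_ite_eq {κ : Type*} [Fintype κ] [DecidableEq κ] (w : κ → ℝ)
    (hw : ∑ o, w o = 1) (a : κ) (x y : ℝ) :
    ∑ o, w o * (if o = a then x else y) = w a * x + (1 - w a) * y := by
  have hsplit : ∀ o,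
      w o * (if o = a then x else y) = w o * y + if o = a then w o * (x - y) else 0 := by
    intro o; split_ifs <;> ring
  simp_rw [hsplit, sum_add_distrib, ← sum_mul, hw, sum_ite_eq' univ a, if_pos (mem_univ a)]
  ring

theorem sum_ite_and_forall_lt_not {ι M : Type*} [Fintype ι] [LinearOrder ι] [AddCommMonoid M]
    (A : ι → Prop) [DecidablePred A] (c : M) :
    ∑ j, (if A j ∧ ∀ j' < j, ¬ A j' then c else 0) = if ∃ j, A j then c else 0 := by
  split_ifs with h
  · obtain ⟨j₀, hj₀, hmin⟩ := WellFounded.has_min wellFounded_lt {j | A j} h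
    have hfirst : A j₀ ∧ ∀ j' < j₀, ¬ A j' := ⟨hj₀, fun j' hj' hA ↦ hmin j' hA hj'⟩
    rw [sum_eq_single j₀ ?_ (fun h ↦ absurd (mem_univ j₀) h), if_pos hfirst]
    intro j _ hne
    rw [if_neg]
    rintro ⟨hA, hbefore⟩
    rcases lt_or_gt_of_ne hne with hlt | hgt
    · exact hfirst.2 j hlt hA
    · exact hbefore j₀ hgt hj₀
  · push Not at h
    exact sum_eq_zero fun j _ ↦ if_neg fun hj ↦ h j hj.1

theorem one_sub_sum_le_prod_one_sub {ι : Type*} [DecidableEq ι] (s : Finset ι) (f : ι → ℝ)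
    (h0 : ∀ i ∈ s, 0 ≤ f i) (h1 : ∀ i ∈ s, f i ≤ 1) :
    1 - ∑ i ∈ s, f i ≤ ∏ i ∈ s, (1 - f i) := by
  induction s using Finset.induction_on with
  | empty => simp
  | @insert a s ha ih =>
    rw [sum_insert ha, prod_insert ha]
    have ih' := ih (fun i hi ↦ h0 i (mem_insert_of_mem hi)) (fun i hi ↦ h1 i (mem_insert_of_mem hi))
    have ha0 := h0 a (mem_insert_self a s)
    have ha1 := h1 a (mem_insert_self a s)
    have hs0 : 0 ≤ ∑ i ∈ s, f i := sum_nonneg fun i hi ↦ h0 i (mem_insert_of_mem hi)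
    nlinarith

theorem sum_one_sub_mul_prod_erase_le_one {ι : Type*} [DecidableEq ι] (s : Finset ι)
    (q : ι → ℝ) (hq : ∀ i, 0 ≤ q i ∧ q i ≤ 1) :
    ∑ i ∈ s, (1 - q i) * ∏ k ∈ s.erase i, q k ≤ 1 := by
  induction s using Finset.induction_on with
  | empty => simp
  | @insert a s ha ih =>
    have hrest : ∀ i ∈ s, (1 - q i) * ∏ k ∈ (insert a s).erase i, q k
        = q a * ((1 - q i) * ∏ k ∈ s.erase i, q k) := by
      intro i hi
      rw [erase_insert_of_ne (ne_of_mem_of_not_mem hi ha).symm,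
        prod_insert fun h ↦ ha (mem_of_mem_erase h)]
      ring
    rw [sum_insert ha, erase_insert ha, sum_congr rfl hrest, ← mul_sum]
    have hprod : ∏ k ∈ s, q k ≤ 1 := prod_le_one (fun i _ ↦ (hq i).1) fun i _ ↦ (hq i).2
    nlinarith [mul_le_mul_of_nonneg_left ih (hq a).1, hq a]

section Health

variable {n B : ℕ} {q : Fin n → ℝ}

theorem healthProb_nonneg (hq : ∀ i, 0 ≤ q i ∧ q i ≤ 1) (ω : Fin n → Bool) :
    0 ≤ healthProb q ω :=
  prod_nonneg fun i _ ↦ by cases ω i <;> simp [(hq i).1, (hq i).2]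

theorem sum_ite_healthProb_mono (hq : ∀ i, 0 ≤ q i ∧ q i ≤ 1)
    {P Q : (Fin n → Bool) → Prop} [DecidablePred P] [DecidablePred Q] (h : ∀ ω, P ω → Q ω) :
    ∑ ω, (if P ω then healthProb q ω else 0) ≤ ∑ ω, (if Q ω then healthProb q ω else 0) :=
  sum_le_sum fun ω _ ↦ by
    split_ifs with hP hQ
    exacts [le_rfl, absurd (h ω hP) hQ, healthProb_nonneg hq ω, le_rfl]

theorem sum_ite_forall_mem_healthProb (t : Finset (Fin n)) :
    ∑ ω, (if ∀ k ∈ t, ω k = true then healthProb q ω else 0) = ∏ k ∈ t, q k := by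
  have hindicator : ∀ ω : Fin n → Bool,
      (if ∀ k ∈ t, ω k = true then healthProb q ω else 0)
        = healthProb q ω * ∏ k ∈ t, (if ω k = true then 1 else 0) := by
    intro ω
    split_ifs with h
    · rw [prod_eq_one fun k hk ↦ if_pos (h k hk), mul_one]
    · push Not at h
      obtain ⟨k, hk, hfalse⟩ := h
      rw [prod_eq_zero hk (if_neg hfalse), mul_zero]
  simp_rw [hindicator]
  unfold healthProb
  rw [sum_prod_mul_prod_eq_prod_sum (fun i b ↦ if b then q i else 1 - q i)
    (fun k b ↦ if b = true then 1 else 0) (fun i ↦ by simp) t]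
  simp

theorem inNegProb_nonneg (hq : ∀ i, 0 ≤ q i ∧ q i ≤ 1) (T : Fin B → Finset (Fin n)) (i : Fin n) :
    0 ≤ inNegProb q T i :=
  sum_nonneg fun ω _ ↦ by split_ifs; exacts [healthProb_nonneg hq ω, le_rfl]

theorem inNegProb_le (hq : ∀ i, 0 ≤ q i ∧ q i ≤ 1) (T : Fin B → Finset (Fin n)) (i : Fin n) :
    inNegProb q T i ≤ q i := by
  calc inNegProb q T i
      ≤ ∑ ω, (if ∀ k ∈ ({i} : Finset (Fin n)), ω k = true then healthProb q ω else 0) :=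
        sum_ite_healthProb_mono hq fun ω ⟨_, hi, hneg⟩ k hk ↦ by
          rw [mem_singleton.mp hk]; exact hneg i hi
    _ = q i := by rw [sum_ite_forall_mem_healthProb, prod_singleton]

theorem prod_le_inNegProb (hq : ∀ i, 0 ≤ q i ∧ q i ≤ 1) {T : Fin B → Finset (Fin n)}
    {i : Fin n} {j : Fin B} (hi : i ∈ T j) :
    ∏ k ∈ T j, q k ≤ inNegProb q T i := by
  rw [← sum_ite_forall_mem_healthProb]
  exact sum_ite_healthProb_mono hq fun ω hneg ↦ ⟨j, hi, hneg⟩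

theorem pivotalProb_nonneg (hq : ∀ i, 0 ≤ q i ∧ q i ≤ 1) (T : Fin B → Finset (Fin n))
    (i : Fin n) (j : Fin B) : 0 ≤ pivotalProb q T i j :=
  sum_nonneg fun ω _ ↦ by split_ifs; exacts [healthProb_nonneg hq ω, le_rfl]

theorem pivotalProb_le_prod (hq : ∀ i, 0 ≤ q i ∧ q i ≤ 1) (T : Fin B → Finset (Fin n))
    (i : Fin n) (j : Fin B) : pivotalProb q T i j ≤ ∏ k ∈ T j, q k := by
  rw [← sum_ite_forall_mem_healthProb]
  exact sum_ite_healthProb_mono hq fun _ h ↦ h.2.1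

theorem pivotalProb_eq_zero_of_notMem {T : Fin B → Finset (Fin n)} {i : Fin n} {j : Fin B}
    (hi : i ∉ T j) : pivotalProb q T i j = 0 :=
  sum_eq_zero fun _ _ ↦ if_neg fun h ↦ hi h.1

theorem pivotalProb_eq_zero_of_q_eq_zero {T : Fin B → Finset (Fin n)} {i : Fin n} (hqi : q i = 0)
    (j : Fin B) : pivotalProb q T i j = 0 :=
  sum_eq_zero fun ω _ ↦ by
    split_ifs with h
    · exact prod_eq_zero (mem_univ i) (by rw [h.2.1 i h.1, if_pos rfl, hqi])
    · rfl

/-- Exactly one test is pivotal for `i` whenever `i` lies in a negative test: the first one. -/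
theorem sum_pivotalProb (T : Fin B → Finset (Fin n)) (i : Fin n) :
    ∑ j, pivotalProb q T i j = inNegProb q T i := by
  unfold pivotalProb inNegProb
  rw [sum_comm]
  refine sum_congr rfl fun ω _ ↦ ?_
  convert sum_ite_and_forall_lt_not (fun j ↦ i ∈ T j ∧ ∀ k ∈ T j, ω k = true)
    (healthProb q ω) using 3 with j
  simp only [and_assoc, not_and, not_forall, Bool.not_eq_true, exists_prop]

theorem welfare_eq_sum_sum_pivotalProb (u : Fin n → ℝ) (T : Fin B → Finset (Fin n)) :
    welfare q u T = ∑ j, ∑ i ∈ T j, u i * pivotalProb q T i j := by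
  have hextend : ∀ j, ∑ i ∈ T j, u i * pivotalProb q T i j = ∑ i, u i * pivotalProb q T i j :=
    fun j ↦ sum_subset (subset_univ _) fun i _ hi ↦ by
      rw [pivotalProb_eq_zero_of_notMem hi, mul_zero]
  simp_rw [hextend, welfare, ← sum_pivotalProb T, mul_sum]
  exact sum_comm

theorem noWelfare_le_welfare (hq : ∀ i, 0 ≤ q i ∧ q i ≤ 1) {u : Fin n → ℝ} (hu : ∀ i, 0 ≤ u i)
    {T : Fin B → Finset (Fin n)} (hT : ∀ j k, j ≠ k → Disjoint (T j) (T k)) :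
    noWelfare q u T ≤ welfare q u T := by
  have hdisj : ((univ : Finset (Fin B)) : Set (Fin B)).PairwiseDisjoint T :=
    fun j _ k _ hjk ↦ hT j k hjk
  calc noWelfare q u T = ∑ j, ∑ i ∈ T j, u i * ∏ k ∈ T j, q k := by
        simp_rw [noWelfare, testWelfare, mul_sum, mul_comm]
    _ ≤ ∑ j, ∑ i ∈ T j, u i * inNegProb q T i :=
        sum_le_sum fun j _ ↦ sum_le_sum fun i hi ↦
          mul_le_mul_of_nonneg_left (prod_le_inNegProb hq hi) (hu i)
    _ = ∑ i ∈ univ.biUnion T, u i * inNegProb q T i := (sum_biUnion hdisj).symm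
    _ ≤ welfare q u T :=
        sum_le_sum_of_subset_of_nonneg (subset_univ _) fun i _ _ ↦
          mul_nonneg (hu i) (inNegProb_nonneg hq T i)

end Health

theorem prod_ite_ite_eq_ite_prod {ι : Type*} [DecidableEq ι] {s : Finset ι} {i : ι} (hi : i ∈ s)
    (P : ι → Prop) [DecidablePred P] (q : ι → ℝ) :
    ∏ k ∈ s, (if P k then q k else if k = i then 0 else 1)
      = if P i then ∏ k ∈ s, (if P k then q k else 1) else 0 := by
  split_ifs with hPi
  · refine prod_congr rfl fun k _ ↦ ?_
    split_ifs with hPk hki <;> first | rfl | exact absurd (hki ▸ hPi) hPk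
  · exact prod_eq_zero hi (by simp [hPi])

section AssignedRegime

variable {n B : ℕ}

def assignedRegime (T : Fin B → Finset (Fin n)) (σ : Fin n → Option (Fin B)) (j : Fin B) :
    Finset (Fin n) :=
  (T j).filter (σ · = some j)

theorem assignedRegime_disjoint (T : Fin B → Finset (Fin n)) (σ : Fin n → Option (Fin B))
    {j k : Fin B} (hjk : j ≠ k) : Disjoint (assignedRegime T σ j) (assignedRegime T σ k) := by
  refine disjoint_left.mpr fun i hij hik ↦ hjk ?_
  simp only [assignedRegime, mem_filter] at hij hik
  exact Option.some_injective _ (hij.2.symm.trans hik.2)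

theorem card_assignedRegime_le (T : Fin B → Finset (Fin n)) (σ : Fin n → Option (Fin B))
    (j : Fin B) : (assignedRegime T σ j).card ≤ (T j).card :=
  card_filter_le _ _

theorem testWelfare_assignedRegime (q u : Fin n → ℝ) (T : Fin B → Finset (Fin n))
    (σ : Fin n → Option (Fin B)) (j : Fin B) :
    testWelfare q u (assignedRegime T σ j)
      = ∑ i ∈ T j, u i * ∏ k ∈ T j, (if σ k = some j then q k else if k = i then 0 else 1) := by
  rw [testWelfare, assignedRegime, prod_filter, sum_filter, mul_comm, sum_mul]
  refine sum_congr rfl fun i hi ↦ ?_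
  rw [prod_ite_ite_eq_ite_prod hi, mul_ite, mul_zero, ite_mul, zero_mul]

theorem sum_prod_mul_testWelfare_assignedRegime (q u : Fin n → ℝ) (T : Fin B → Finset (Fin n))
    (w : Fin n → Option (Fin B) → ℝ) (hw : ∀ i, ∑ o, w i o = 1) (j : Fin B) :
    ∑ σ : Fin n → Option (Fin B), (∏ i, w i (σ i)) * testWelfare q u (assignedRegime T σ j)
      = ∑ i ∈ T j, u i * (w i (some j) * q i)
          * ∏ k ∈ (T j).erase i, (1 - w k (some j) * (1 - q k)) := by
  simp_rw [testWelfare_assignedRegime, mul_sum]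
  rw [sum_comm]
  refine sum_congr rfl fun i hi ↦ ?_
  simp_rw [mul_left_comm _ (u i), ← mul_sum]
  rw [sum_prod_mul_prod_eq_prod_sum w
      (fun k o ↦ if o = some j then q k else if k = i then 0 else 1) hw,
    ← mul_prod_erase _ _ hi, mul_assoc]
  congr 2
  · rw [sum_mul_ite_eq _ (hw i), if_pos rfl]
    ring
  · refine prod_congr rfl fun k hk ↦ ?_
    rw [sum_mul_ite_eq _ (hw k), if_neg (ne_of_mem_erase hk)]
    ring

theorem sum_prod_mul_noWelfare_assignedRegime (q u : Fin n → ℝ) (T : Fin B → Finset (Fin n))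
    (w : Fin n → Option (Fin B) → ℝ) (hw : ∀ i, ∑ o, w i o = 1) :
    ∑ σ : Fin n → Option (Fin B), (∏ i, w i (σ i)) * noWelfare q u (assignedRegime T σ)
      = ∑ j, ∑ i ∈ T j, u i * (w i (some j) * q i)
          * ∏ k ∈ (T j).erase i, (1 - w k (some j) * (1 - q k)) := by
  simp_rw [noWelfare, mul_sum]
  rw [sum_comm]
  exact sum_congr rfl fun j _ ↦ sum_prod_mul_testWelfare_assignedRegime q u T w hw j

end AssignedRegime

theorem one_half_le_prod_one_sub_mul {ι : Type*} [DecidableEq ι] {s t : Finset ι} (hst : s ⊆ t)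
    (q r : ι → ℝ) (hq : ∀ i, 0 ≤ q i ∧ q i ≤ 1) (hr0 : ∀ k ∈ t, 0 ≤ r k)
    (hr : ∀ k ∈ t, r k ≤ (∏ l ∈ t.erase k, q l) / 2) :
    1 / 2 ≤ ∏ k ∈ s, (1 - r k * (1 - q k)) := by
  have hf0 : ∀ k ∈ t, 0 ≤ r k * (1 - q k) := fun k hk ↦
    mul_nonneg (hr0 k hk) (sub_nonneg.mpr (hq k).2)
  have hsum_t : ∑ k ∈ t, r k * (1 - q k) ≤ 1 / 2 :=
    calc ∑ k ∈ t, r k * (1 - q k) ≤ ∑ k ∈ t, (1 - q k) * (∏ l ∈ t.erase k, q l) / 2 :=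
          sum_le_sum fun k hk ↦ by
            rw [mul_comm, mul_div_assoc]
            exact mul_le_mul_of_nonneg_left (hr k hk) (sub_nonneg.mpr (hq k).2)
      _ ≤ 1 / 2 := by
          rw [← sum_div]
          linarith [sum_one_sub_mul_prod_erase_le_one t q hq]
  have hsum_s : ∑ k ∈ s, r k * (1 - q k) ≤ 1 / 2 :=
    (sum_le_sum_of_subset_of_nonneg hst fun k hk _ ↦ hf0 k hk).trans hsum_t
  have hf1 : ∀ k ∈ s, r k * (1 - q k) ≤ 1 := fun k hk ↦ by
    linarith [single_le_sum hf0 (hst hk)]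
  linarith [one_sub_sum_le_prod_one_sub s _ (fun k hk ↦ hf0 k (hst hk)) hf1]

section Rounding

variable {n B : ℕ} {q : Fin n → ℝ}

/-- Junk value `0` when `q i = 0`; harmless, since `pivotalProb` vanishes there. -/
noncomputable def roundingProb (q : Fin n → ℝ) (T : Fin B → Finset (Fin n)) (i : Fin n)
    (j : Fin B) : ℝ :=
  pivotalProb q T i j / (2 * q i)

theorem roundingProb_nonneg (hq : ∀ i, 0 ≤ q i ∧ q i ≤ 1) (T : Fin B → Finset (Fin n))
    (i : Fin n) (j : Fin B) : 0 ≤ roundingProb q T i j :=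
  div_nonneg (pivotalProb_nonneg hq T i j) (by linarith [(hq i).1])

theorem mul_roundingProb (T : Fin B → Finset (Fin n)) (i : Fin n) (j : Fin B) :
    q i * roundingProb q T i j = pivotalProb q T i j / 2 := by
  by_cases h : q i = 0
  · rw [h, zero_mul, pivotalProb_eq_zero_of_q_eq_zero h, zero_div]
  · rw [roundingProb]
    field_simp

theorem sum_roundingProb_le (hq : ∀ i, 0 ≤ q i ∧ q i ≤ 1) (T : Fin B → Finset (Fin n))
    (i : Fin n) : ∑ j, roundingProb q T i j ≤ 1 / 2 := by
  simp_rw [roundingProb, ← sum_div, sum_pivotalProb]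
  rcases (hq i).1.eq_or_lt with h | h
  · simp [← h]
  · rw [div_le_iff₀ (by positivity)]
    linarith [inNegProb_le hq T i]

theorem roundingProb_le (hq : ∀ i, 0 ≤ q i ∧ q i ≤ 1) {T : Fin B → Finset (Fin n)}
    {i : Fin n} {j : Fin B} (hi : i ∈ T j) :
    roundingProb q T i j ≤ (∏ k ∈ (T j).erase i, q k) / 2 := by
  have hprod : 0 ≤ ∏ k ∈ (T j).erase i, q k := prod_nonneg fun k _ ↦ (hq k).1
  rcases (hq i).1.eq_or_lt with h | h
  · simp only [roundingProb, ← h, mul_zero, div_zero]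
    positivity
  · have hpiv := pivotalProb_le_prod hq T i j
    rw [← mul_prod_erase _ _ hi] at hpiv
    rw [roundingProb, div_le_div_iff₀ (by positivity) two_pos]
    nlinarith

noncomputable def roundingWeight (q : Fin n → ℝ) (T : Fin B → Finset (Fin n)) (i : Fin n) :
    Option (Fin B) → ℝ
  | none => 1 - ∑ j, roundingProb q T i j
  | some j => roundingProb q T i j

theorem roundingWeight_nonneg (hq : ∀ i, 0 ≤ q i ∧ q i ≤ 1) (T : Fin B → Finset (Fin n))
    (i : Fin n) : ∀ o, 0 ≤ roundingWeight q T i o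
  | none => sub_nonneg.mpr ((sum_roundingProb_le hq T i).trans (by norm_num))
  | some j => roundingProb_nonneg hq T i j

theorem sum_roundingWeight (q : Fin n → ℝ) (T : Fin B → Finset (Fin n)) (i : Fin n) :
    ∑ o, roundingWeight q T i o = 1 := by
  rw [Fintype.sum_option]
  exact sub_add_cancel _ _

theorem welfare_le_four_mul_sum_prod_mul_noWelfare (hq : ∀ i, 0 ≤ q i ∧ q i ≤ 1)
    {u : Fin n → ℝ} (hu : ∀ i, 0 ≤ u i) (T : Fin B → Finset (Fin n)) :
    welfare q u T ≤ 4 * ∑ σ : Fin n → Option (Fin B),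
      (∏ i, roundingWeight q T i (σ i)) * noWelfare q u (assignedRegime T σ) := by
  rw [sum_prod_mul_noWelfare_assignedRegime _ _ _ _ (sum_roundingWeight q T),
    welfare_eq_sum_sum_pivotalProb]
  simp_rw [mul_sum]
  refine sum_le_sum fun j _ ↦ sum_le_sum fun i _ ↦ ?_
  have hhalf : 1 / 2 ≤ ∏ k ∈ (T j).erase i, (1 - roundingWeight q T k (some j) * (1 - q k)) :=
    one_half_le_prod_one_sub_mul (erase_subset i (T j)) q _ hq
      (fun k _ ↦ roundingProb_nonneg hq T k j) fun k hk ↦ roundingProb_le hq hk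
  have hpiv : 0 ≤ u i * pivotalProb q T i j := mul_nonneg (hu i) (pivotalProb_nonneg hq T i j)
  change u i * pivotalProb q T i j ≤ 4 * (u i * (roundingProb q T i j * q i) * _)
  rw [mul_comm (roundingProb q T i j), mul_roundingProb]
  nlinarith [mul_le_mul_of_nonneg_left hhalf hpiv]

end Rounding

theorem stmt6_general {n B G : ℕ} (q u : Fin n → ℝ)
    (hq : ∀ i, 0 ≤ q i ∧ q i ≤ 1) (hu : ∀ i, 0 ≤ u i)
    (T : Fin B → Finset (Fin n)) (hsize : ∀ j, (T j).card ≤ G) :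
    ∃ T' : Fin B → Finset (Fin n),
      (∀ j k, j ≠ k → Disjoint (T' j) (T' k)) ∧ (∀ j, (T' j).card ≤ G) ∧
        welfare q u T ≤ 4 * welfare q u T' := by
  obtain ⟨σ, hσ⟩ := exists_sum_prod_mul_le (roundingWeight q T) (roundingWeight_nonneg hq T)
    (sum_roundingWeight q T) fun σ ↦ noWelfare q u (assignedRegime T σ)
  have hdisj : ∀ j k, j ≠ k → Disjoint (assignedRegime T σ j) (assignedRegime T σ k) :=
    fun _ _ ↦ assignedRegime_disjoint T σ
  refine ⟨assignedRegime T σ, hdisj, fun j ↦ (card_assignedRegime_le T σ j).trans (hsize j), ?_⟩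
  calc welfare q u T
      ≤ 4 * ∑ σ' : Fin n → Option (Fin B),
          (∏ i, roundingWeight q T i (σ' i)) * noWelfare q u (assignedRegime T σ') :=
        welfare_le_four_mul_sum_prod_mul_noWelfare hq hu T
    _ ≤ 4 * noWelfare q u (assignedRegime T σ) := by gcongr
    _ ≤ 4 * welfare q u (assignedRegime T σ) := by
        gcongr
        exact noWelfare_le_welfare hq hu hdisj

/-- For any budget `B ≥ 1`, the gain of overlaps is at most 4: the welfare of any
(possibly overlapping) testing regime is at most four times the welfare of some
non-overlapping testing regime with the same budget and pool bound. -/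
theorem stmt6 {n B G : ℕ} (hB : 1 ≤ B) (q u : Fin n → ℝ)
    (hq : ∀ i, 0 ≤ q i ∧ q i ≤ 1) (hu : ∀ i, 0 ≤ u i)
    (T : Fin B → Finset (Fin n)) (hsize : ∀ j, (T j).card ≤ G) :
    ∃ T' : Fin B → Finset (Fin n),
      (∀ j k, j ≠ k → Disjoint (T' j) (T' k)) ∧ (∀ j, (T' j).card ≤ G) ∧
        welfare q u T ≤ 4 * welfare q u T' :=
  stmt6_general q u hq hu T hsize
end

section
/- With pools A, B, C as above and q_C = 1, if q_A ≥ 5/6 and q_A ≥ q_B, then the overlapping regime T* = (A∪C, B∪C) has welfare at most 7/6 times the welfare of the non-overlapping regime T^1 = (A∪C, B). Concretely, (q_A u_A + q_B u_B + (q_A + (1−q_A)q_B) u_C) ≤ (7/6)(q_A u_A + q_B u_B + q_A u_C). -/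
open Finset

theorem one_sub_mul_le_mul_of_le {a b ε : ℝ} (hba : b ≤ a) (ha0 : 0 ≤ a) (ha1 : a ≤ 1)
    (hε : 1 - a ≤ ε) : (1 - a) * b ≤ ε * a :=
  calc (1 - a) * b ≤ (1 - a) * a := mul_le_mul_of_nonneg_left hba (sub_nonneg.2 ha1)
    _ ≤ ε * a := mul_le_mul_of_nonneg_right hε ha0

theorem stmt12_general (qA qB uA uB uC : ℝ)
    (hqA1 : qA ≤ 1) (hqB0 : 0 ≤ qB)
    (huA : 0 ≤ uA) (huB : 0 ≤ uB) (huC : 0 ≤ uC)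
    (h56 : 5 / 6 ≤ qA) (hAB : qB ≤ qA) :
    qA * uA + qB * uB + (qA + (1 - qA) * qB) * uC ≤
      (7 / 6) * (qA * uA + qB * uB + qA * uC) := by
  have hqA0 : 0 ≤ qA := by linarith
  have hcoef : (1 - qA) * qB ≤ 1 / 6 * qA :=
    one_sub_mul_le_mul_of_le hAB hqA0 hqA1 (by linarith)
  have hgap : (7 / 6) * (qA * uA + qB * uB + qA * uC) -
      (qA * uA + qB * uB + (qA + (1 - qA) * qB) * uC) =
      (qA * uA + qB * uB) / 6 + (1 / 6 * qA - (1 - qA) * qB) * uC := by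
    ring
  have hgap_nonneg : 0 ≤ (qA * uA + qB * uB) / 6 + (1 / 6 * qA - (1 - qA) * qB) * uC :=
    add_nonneg (by positivity) (mul_nonneg (sub_nonneg.2 hcoef) huC)
  linarith

/-- With `q_C = 1`: if `q_A ≥ 5/6` and `q_A ≥ q_B`, the overlapping regime
`(A ∪ C, B ∪ C)` has welfare at most `7/6` times that of `(A ∪ C, B)`. -/
theorem stmt12 (qA qB uA uB uC : ℝ)
    (hqA0 : 0 ≤ qA) (hqA1 : qA ≤ 1) (hqB0 : 0 ≤ qB) (hqB1 : qB ≤ 1)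
    (huA : 0 ≤ uA) (huB : 0 ≤ uB) (huC : 0 ≤ uC)
    (h56 : 5 / 6 ≤ qA) (hAB : qB ≤ qA) :
    qA * uA + qB * uB + (qA + (1 - qA) * qB) * uC ≤
      (7 / 6) * (qA * uA + qB * uB + qA * uC) :=
  stmt12_general qA qB uA uB uC hqA1 hqB0 huA huB huC h56 hAB
end

section
/- Suppose all individuals have utility 1 and are sorted so q_1 ≥ q_2 ≥ ... ≥ q_n. Then there exists an optimal non-overlapping testing regime whose tests are consecutive intervals: test sizes can be ordered decreasingly and test j pools the individuals with indices Σ_{j'<j}|t_{j'}|+1 through Σ_{j'<j}|t_{j'}|+|t_j|. -/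
/-!
Among the optimal regimes pick one that minimises a lexicographic potential. Dropping a member
from a test cannot help, so every member of a test of size `s` has `q ≥ 1 - 1/s`. Replacing a
tested individual by a healthier untested one never lowers welfare, and neither does re-pooling
two tests `t_a, t_b` (`a < b`) as the healthiest `max |t_a| |t_b|` members of `t_a ∪ t_b`
followed by the rest: by Bernoulli's inequality, the `1 - 1/s` bound pays for moving healthy
individuals into the larger test. Both moves strictly lower the potential unless they change
nothing, so the tested individuals form an initial segment and each test is at least as large as,
and lies entirely below, every later test. Counting then shows that the tests are consecutive
intervals.
-/

open Finset

open scoped Function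

section Domination

variable {ι : Type*}

lemma sum_lt_sum_of_card_le_of_forall_lt {s t : Finset ι} {f : ι → ℕ} (hst : #s ≤ #t)
    (hs : s.Nonempty) (h : ∀ x ∈ s, ∀ y ∈ t, f x < f y) :
    ∑ x ∈ s, f x < ∑ y ∈ t, f y := by
  obtain ⟨y₀, hy₀, hmin⟩ := t.exists_min_image f (card_pos.1 (hs.card_pos.trans_le hst))
  calc ∑ x ∈ s, f x < ∑ _x ∈ s, f y₀ := sum_lt_sum_of_nonempty hs fun x hx => h x hx y₀ hy₀
    _ = #s * f y₀ := by rw [sum_const, smul_eq_mul]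
    _ ≤ #t * f y₀ := Nat.mul_le_mul_right _ hst
    _ = ∑ _y ∈ t, f y₀ := by rw [sum_const, smul_eq_mul]
    _ ≤ ∑ y ∈ t, f y := sum_le_sum hmin

/-- By Bernoulli's inequality `a ≤ b (1 - 1/b) ^ (b - a)`, the `b - a` surplus factors of `t`,
each at least `1 - 1/b`, pay for raising the weight from `a` to `b`. -/
lemma mul_prod_le_mul_prod_of_forall_le {s t : Finset ι} {q : ι → ℝ} {a b : ℕ} (hab : a ≤ b)
    (hcard : #s + b = #t + a) (hs : ∀ x ∈ s, 0 ≤ q x) (hdom : ∀ x ∈ s, ∀ y ∈ t, q x ≤ q y)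
    (ht : ∀ y ∈ t, 1 - 1 / (b : ℝ) ≤ q y) :
    a * ∏ x ∈ s, q x ≤ b * ∏ y ∈ t, q y := by
  rcases t.eq_empty_or_nonempty with rfl | htne
  · obtain ⟨rfl, rfl⟩ : s = ∅ ∧ a = b := by
      rw [← card_eq_zero]; simp only [card_empty] at hcard; omega
    rfl
  rcases Nat.eq_zero_or_pos b with rfl | hb
  · obtain rfl : a = 0 := by omega
    simp
  obtain ⟨y₀, hy₀, hmin⟩ := t.exists_min_image q htne
  have hb' : (1 : ℝ) ≤ b := by exact_mod_cast hb
  have hinv : 1 / (b : ℝ) ≤ 1 := by rw [div_le_one (by linarith)]; exact hb'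
  have hm : 0 ≤ q y₀ := (sub_nonneg.2 hinv).trans (ht y₀ hy₀)
  have hbern : (a : ℝ) ≤ b * q y₀ ^ (b - a) :=
    calc (a : ℝ) = b * (1 + ((b - a : ℕ) : ℝ) * -(1 / (b : ℝ))) := by
          rw [Nat.cast_sub hab]; field_simp; ring
      _ ≤ b * (1 + -(1 / (b : ℝ))) ^ (b - a) := by
          gcongr; exact one_add_mul_le_pow (by linarith) _
      _ ≤ b * q y₀ ^ (b - a) := by
          rw [← sub_eq_add_neg]; gcongr; exact ht y₀ hy₀
  calc (a : ℝ) * ∏ x ∈ s, q x ≤ a * ∏ _x ∈ s, q y₀ := by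
        gcongr (a : ℝ) * ?_
        exact prod_le_prod hs fun x hx => hdom x hx y₀ hy₀
    _ ≤ (b * q y₀ ^ (b - a)) * q y₀ ^ #s := by rw [prod_const]; gcongr
    _ = b * ∏ _y ∈ t, q y₀ := by
        rw [prod_const, show #t = #s + (b - a) by omega, pow_add]; ring
    _ ≤ b * ∏ y ∈ t, q y := by gcongr with y hy; exact hmin y hy

lemma prod_le_prod_of_card_eq_of_forall_le {s t : Finset ι} {q : ι → ℝ} (hst : #s = #t)
    (hs : ∀ x ∈ s, 0 ≤ q x) (ht : ∀ y ∈ t, 0 ≤ q y) (hdom : ∀ x ∈ s, ∀ y ∈ t, q x ≤ q y) :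
    ∏ x ∈ s, q x ≤ ∏ y ∈ t, q y := by
  simpa using mul_prod_le_mul_prod_of_forall_le (a := 1) (b := 1) le_rfl (by omega) hs hdom
    (by simpa using ht)

end Domination

section InitialSegments

variable {α : Type*} [LinearOrder α]

def IsInitialIn (X S : Finset α) : Prop :=
  X ⊆ S ∧ ∀ x ∈ X, ∀ y ∈ S, y ∉ X → x < y

lemma exists_isInitialIn (S : Finset α) {k : ℕ} (hk : k ≤ #S) :
    ∃ X, IsInitialIn X S ∧ #X = k := by
  induction k with
  | zero => exact ⟨∅, ⟨empty_subset S, by simp⟩, rfl⟩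
  | succ k ih =>
    obtain ⟨X, ⟨hXS, hX⟩, rfl⟩ := ih (by omega)
    have hrest : (S \ X).Nonempty := by
      rw [← card_pos, card_sdiff_of_subset hXS]; omega
    set m := (S \ X).min' hrest
    have hm : m ∈ S \ X := min'_mem _ hrest
    rw [mem_sdiff] at hm
    refine ⟨insert m X, ⟨insert_subset hm.1 hXS, ?_⟩, card_insert_of_notMem hm.2⟩
    intro x hx y hy hyX
    rw [mem_insert, not_or] at hyX
    have hmy : m ≤ y := min'_le _ _ (mem_sdiff.2 ⟨hy, hyX.2⟩)
    rcases mem_insert.1 hx with rfl | hx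
    · exact lt_of_le_of_ne hmy (Ne.symm hyX.1)
    · exact hX x hx y hy hyX.2

namespace IsInitialIn

variable {X S C : Finset α}

lemma sum_le_sum (hX : IsInitialIn X S) {f : α → ℕ} (hf : StrictMono f) (hC : C ⊆ S)
    (hcard : #C = #X) : ∑ x ∈ X, f x ≤ ∑ x ∈ C, f x := by
  by_cases hCX : C = X
  · rw [hCX]
  have hne : (X \ C).Nonempty := by
    rw [sdiff_nonempty]
    exact fun hsub => hCX (eq_of_subset_of_card_le hsub hcard.le).symm
  have hXC := card_inter_add_card_sdiff X C
  have hCX' := card_inter_add_card_sdiff C X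
  rw [inter_comm] at hCX'
  have hlt : ∑ x ∈ X \ C, f x < ∑ x ∈ C \ X, f x := by
    refine sum_lt_sum_of_card_le_of_forall_lt (by omega) hne fun x hx y hy => hf ?_
    rw [mem_sdiff] at hx hy
    exact hX.2 x hx.1 y (hC hy.1) hy.2
  rw [← sum_inter_add_sum_sdiff X C, ← sum_inter_add_sum_sdiff C X,
    inter_comm]
  omega

lemma sum_lt_sum (hX : IsInitialIn X S) {f : α → ℕ} (hf : StrictAnti f) (hpos : ∀ x, 0 < f x)
    (hC : C ⊆ S) (hcard : #C ≤ #X) (hCX : C ≠ X) : ∑ x ∈ C, f x < ∑ x ∈ X, f x := by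
  by_cases hsub : C ⊆ X
  · obtain ⟨x, hxX, hxC⟩ := exists_of_ssubset (hsub.ssubset_of_ne hCX)
    exact sum_lt_sum_of_subset hsub hxX hxC (hpos x) fun _ _ _ => Nat.zero_le _
  have hXC := card_inter_add_card_sdiff X C
  have hCX' := card_inter_add_card_sdiff C X
  rw [inter_comm] at hCX'
  have hlt : ∑ x ∈ C \ X, f x < ∑ x ∈ X \ C, f x := by
    refine sum_lt_sum_of_card_le_of_forall_lt (by omega) (sdiff_nonempty.2 hsub)
      fun x hx y hy => hf ?_
    rw [mem_sdiff] at hx hy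
    exact hX.2 y hy.1 x (hC hx.1) hx.2
  rw [← sum_inter_add_sum_sdiff X C, ← sum_inter_add_sum_sdiff C X,
    inter_comm]
  omega

end IsInitialIn

end InitialSegments

section TwoTests

variable {ι : Type*} [DecidableEq ι] {q : ι → ℝ}

lemma pair_welfare_le {A B X : Finset ι} (hAB : Disjoint A B) (hBA : #B ≤ #A)
    (hX : X ⊆ A ∪ B) (hXcard : #X = #A) (hdom : ∀ x ∈ X, ∀ y ∈ A ∪ B, y ∉ X → q y ≤ q x)
    (hq : ∀ i ∈ A ∪ B, 0 ≤ q i) (hA : ∀ i ∈ A, 1 - 1 / (#A : ℝ) ≤ q i) :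
    (∏ i ∈ A, q i) * #A + (∏ i ∈ B, q i) * #B ≤
      (∏ i ∈ X, q i) * #X + (∏ i ∈ (A ∪ B) \ X, q i) * #((A ∪ B) \ X) := by
  have hXsplit : X = A ∩ X ∪ B ∩ X := by
    rw [← union_inter_distrib_right, inter_eq_right.2 hX]
  have hXdisj : Disjoint (A ∩ X) (B ∩ X) :=
    hAB.mono inter_subset_left inter_subset_left
  have hYdisj : Disjoint (A \ X) (B \ X) := hAB.mono sdiff_subset sdiff_subset
  have hXc : #(A ∩ X) + #(B ∩ X) = #X := by
    rw [← card_union_of_disjoint hXdisj, ← hXsplit]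
  have hXprod : (∏ i ∈ A ∩ X, q i) * ∏ i ∈ B ∩ X, q i = ∏ i ∈ X, q i := by
    rw [← prod_union hXdisj, ← hXsplit]
  have hAc := card_inter_add_card_sdiff A X
  have hBc := card_inter_add_card_sdiff B X
  have hYcard : #((A ∪ B) \ X) = #B := by
    rw [union_sdiff_distrib, card_union_of_disjoint hYdisj]; omega
  have hq' : ∀ s ⊆ A ∪ B, ∀ i ∈ s, 0 ≤ q i := fun s hs i hi => hq i (hs hi)
  have h₁ : ∏ i ∈ A \ X, q i ≤ ∏ i ∈ B ∩ X, q i := by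
    refine prod_le_prod_of_card_eq_of_forall_le (by omega)
      (hq' _ (sdiff_subset.trans subset_union_left))
      (hq' _ (inter_subset_left.trans subset_union_right)) fun x hx y hy => ?_
    rw [mem_sdiff] at hx
    exact hdom y (mem_inter.1 hy).2 x (subset_union_left hx.1) hx.2
  have h₂ : (#B : ℝ) * ∏ i ∈ B \ X, q i ≤ #A * ∏ i ∈ A ∩ X, q i := by
    refine mul_prod_le_mul_prod_of_forall_le hBA (by omega)
      (hq' _ (sdiff_subset.trans subset_union_right)) (fun x hx y hy => ?_)
      fun y hy => hA y (mem_inter.1 hy).1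
    rw [mem_sdiff] at hx
    exact hdom y (mem_inter.1 hy).2 x (subset_union_right hx.1) hx.2
  rw [hXcard, hYcard, ← prod_inter_mul_prod_sdiff A X,
    ← prod_inter_mul_prod_sdiff B X, union_sdiff_distrib,
    prod_union hYdisj, ← hXprod]
  -- the gain is the product of the two nonnegative differences `h₁` and `h₂`
  nlinarith [mul_nonneg (sub_nonneg.2 h₁) (sub_nonneg.2 h₂)]

lemma one_sub_inv_card_lt_of_erase {t : Finset ι} {i : ι} (hi : i ∈ t) (hq : ∀ j ∈ t, 0 ≤ q j)
    (h : (∏ j ∈ t.erase i, q j) * #(t.erase i) < (∏ j ∈ t, q j) * #t) :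
    1 - 1 / (#t : ℝ) < q i := by
  rw [← mul_prod_erase t q hi, ← card_erase_add_one hi] at h
  rw [← card_erase_add_one hi]
  have hP : 0 < ∏ j ∈ t.erase i, q j := by
    refine lt_of_le_of_ne (prod_nonneg fun j hj => hq j (mem_of_mem_erase hj)) ?_
    rintro hP; rw [← hP] at h; simp at h
  push_cast at h ⊢
  set c : ℝ := (#(t.erase i) : ℝ)
  have hc : (0 : ℝ) < c + 1 := by positivity
  have hcq : c < q i * (c + 1) := (mul_lt_mul_iff_right₀ hP).1 (by linarith)
  calc 1 - 1 / (c + 1) = c / (c + 1) := by field_simp; ring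
    _ < q i := by rwa [div_lt_iff₀ hc]

end TwoTests

section Updates

variable {κ β : Type*} [DecidableEq κ]

lemma sum_update_add [Fintype κ] {M : Type*} [AddCommMonoid M] (F : κ → β → M) (T : κ → β)
    (a : κ) (t : β) :
    ∑ j, F j (Function.update T a t j) + F a (T a) = ∑ j, F j (T j) + F a t := by
  rw [← add_sum_erase _ _ (mem_univ a), ← add_sum_erase _ _ (mem_univ a),
    Function.update_self, sum_congr rfl fun j hj => by
      rw [Function.update_of_ne (ne_of_mem_erase hj)]]
  abel

lemma sum_update_update_add [Fintype κ] {M : Type*} [AddCommMonoid M] (F : κ → β → M)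
    (T : κ → β) {a b : κ} (hab : a ≠ b) (x y : β) :
    ∑ j, F j (Function.update (Function.update T a x) b y j) + F a (T a) + F b (T b) =
      ∑ j, F j (T j) + F a x + F b y := by
  have h := sum_update_add F (Function.update T a x) b y
  rw [Function.update_of_ne hab.symm] at h
  rw [add_right_comm, h, add_right_comm, sum_update_add]

variable {T : κ → Finset β}

lemma pairwise_disjoint_update (hT : Pairwise (Disjoint on T)) {a : κ} {t : Finset β}
    (ht : ∀ j, j ≠ a → Disjoint t (T j)) : Pairwise (Disjoint on (Function.update T a t)) := by
  intro i j hij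
  simp only [Function.onFun, Function.update_apply]
  split_ifs with hi hj hj
  · exact absurd (hi.trans hj.symm) hij
  · exact ht j hj
  · exact (ht i hi).symm
  · exact hT hij

lemma pairwise_disjoint_update_update [DecidableEq β] (hT : Pairwise (Disjoint on T)) {a b : κ}
    (hab : a ≠ b) {X Y : Finset β} (hXY : Disjoint X Y) (hX : X ⊆ T a ∪ T b)
    (hY : Y ⊆ T a ∪ T b) :
    Pairwise (Disjoint on (Function.update (Function.update T a X) b Y)) := by
  have hout : ∀ j, j ≠ a → j ≠ b → Disjoint (T a ∪ T b) (T j) := fun j ha hb =>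
    disjoint_union_left.2 ⟨hT (Ne.symm ha), hT (Ne.symm hb)⟩
  intro i j hij
  simp only [Function.onFun, Function.update_apply]
  split_ifs <;> subst_vars
  all_goals first
    | exact absurd rfl hij
    | exact hXY
    | exact hXY.symm
    | exact hT hij
    | exact (hout _ ‹_› ‹_›).mono_left hX
    | exact (hout _ ‹_› ‹_›).mono_left hY
    | exact ((hout _ ‹_› ‹_›).mono_left hX).symm
    | exact ((hout _ ‹_› ‹_›).mono_left hY).symm

end Updates

section Regimes

variable {n B : ℕ}

def IsFeasible (G : ℕ) (T : Fin B → Finset (Fin n)) : Prop :=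
  Pairwise (Disjoint on T) ∧ ∀ j, #(T j) ≤ G

def IsOptimal (q : Fin n → ℝ) (G : ℕ) (T : Fin B → Finset (Fin n)) : Prop :=
  IsFeasible G T ∧ ∀ T' : Fin B → Finset (Fin n), IsFeasible G T' →
    noWelfare q (fun _ => 1) T' ≤ noWelfare q (fun _ => 1) T

lemma testWelfare_one (q : Fin n → ℝ) (t : Finset (Fin n)) :
    testWelfare q (fun _ => 1) t = (∏ i ∈ t, q i) * #t := by
  simp [testWelfare]

def indexSum (t : Finset (Fin n)) : ℕ := ∑ i ∈ t, ((i : ℕ) + 1)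

def revIndexSum (t : Finset (Fin n)) : ℕ := ∑ i ∈ t, (n - (i : ℕ))

lemma strictMono_val_add_one : StrictMono fun i : Fin n => (i : ℕ) + 1 :=
  fun _ _ h => Nat.succ_lt_succ h

lemma strictAnti_sub_val : StrictAnti fun i : Fin n => n - (i : ℕ) := fun i j h => by
  have : (i : ℕ) < j := h
  show n - (j : ℕ) < n - i
  omega

/-- Every exchange move lowers this: the first coordinate drops when a test loses a member, trades
one for a lower index, or a larger test takes lower indices from a smaller one; otherwise the
second coordinate drops when lower indices move to an earlier test. -/
def potential (T : Fin B → Finset (Fin n)) : ℕ ×ₗ ℕ :=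
  toLex (∑ j, #(T j) * indexSum (T j), ∑ j : Fin B, ((j : ℕ) + 1) * revIndexSum (T j))

def IsLeastOptimal (q : Fin n → ℝ) (G : ℕ) (T : Fin B → Finset (Fin n)) : Prop :=
  IsOptimal q G T ∧ ∀ T' : Fin B → Finset (Fin n), IsOptimal q G T' → potential T ≤ potential T'

lemma exists_isLeastOptimal (q : Fin n → ℝ) (G : ℕ) :
    ∃ T : Fin B → Finset (Fin n), IsLeastOptimal q G T := by
  classical
  have hempty : IsFeasible G (fun _ : Fin B => (∅ : Finset (Fin n))) :=
    ⟨fun _ _ _ => disjoint_empty_left _, fun _ => by simp⟩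
  obtain ⟨T₀, hT₀, hmax⟩ := (univ.filter (IsFeasible G)).exists_max_image
    (noWelfare q (fun _ => 1)) ⟨_, mem_filter.2 ⟨mem_univ _, hempty⟩⟩
  have hopt : IsOptimal q G T₀ := ⟨(mem_filter.1 hT₀).2, fun T' hT' =>
    hmax T' (mem_filter.2 ⟨mem_univ _, hT'⟩)⟩
  obtain ⟨T, hT, hmin⟩ := (univ.filter (IsOptimal q G)).exists_min_image potential
    ⟨_, mem_filter.2 ⟨mem_univ _, hopt⟩⟩
  exact ⟨T, (mem_filter.1 hT).2, fun T' hT' =>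
    hmin T' (mem_filter.2 ⟨mem_univ _, hT'⟩)⟩

lemma repool_le {q : Fin n → ℝ} (hq : ∀ i, 0 ≤ q i) (hsort : ∀ i j : Fin n, i ≤ j → q j ≤ q i)
    {A B X : Finset (Fin n)} (hAB : Disjoint A B) (hBA : #B ≤ #A)
    (hX : IsInitialIn X (A ∪ B)) (hXcard : #X = #A) (hA : ∀ i ∈ A, 1 - 1 / (#A : ℝ) ≤ q i) :
    testWelfare q (fun _ => 1) A + testWelfare q (fun _ => 1) B ≤
        testWelfare q (fun _ => 1) X + testWelfare q (fun _ => 1) ((A ∪ B) \ X) ∧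
      #X * indexSum X + #((A ∪ B) \ X) * indexSum ((A ∪ B) \ X) ≤
        #A * indexSum A + #B * indexSum B := by
  have hYcard : #((A ∪ B) \ X) = #B := by
    rw [card_sdiff_of_subset hX.1, card_union_of_disjoint hAB]; omega
  refine ⟨?_, ?_⟩
  · simp only [testWelfare_one]
    exact pair_welfare_le hAB hBA hX.1 hXcard
      (fun x hx y hy hyX => hsort x y (hX.2 x hx y hy hyX).le) (fun i _ => hq i) hA
  have hXA : indexSum X ≤ indexSum A :=
    hX.sum_le_sum strictMono_val_add_one subset_union_left hXcard.symm
  have hsplit : indexSum ((A ∪ B) \ X) + indexSum X = indexSum A + indexSum B := by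
    unfold indexSum
    rw [sum_sdiff hX.1, sum_union hAB]
  obtain ⟨d, hd⟩ := Nat.exists_eq_add_of_le hBA
  rw [hYcard, hXcard, hd]
  nlinarith

end Regimes

namespace IsLeastOptimal

variable {n B G : ℕ} {q : Fin n → ℝ} {T : Fin B → Finset (Fin n)}

lemma potential_le (hT : IsLeastOptimal q G T) {T' : Fin B → Finset (Fin n)}
    (hT' : IsFeasible G T') (hW : noWelfare q (fun _ => 1) T ≤ noWelfare q (fun _ => 1) T') :
    potential T ≤ potential T' :=
  hT.2 T' ⟨hT', fun T'' hT'' => (hT.1.2 T'' hT'').trans hW⟩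

lemma card_mul_indexSum_le (hT : IsLeastOptimal q G T) {a : Fin B} {t : Finset (Fin n)}
    (hdisj : ∀ j, j ≠ a → Disjoint t (T j)) (hcard : #t ≤ G)
    (hW : testWelfare q (fun _ => 1) (T a) ≤ testWelfare q (fun _ => 1) t) :
    #(T a) * indexSum (T a) ≤ #t * indexSum t := by
  have hfeas : IsFeasible G (Function.update T a t) := by
    refine ⟨pairwise_disjoint_update hT.1.1.1 hdisj, fun j => ?_⟩
    rw [Function.update_apply]
    split_ifs
    exacts [hcard, hT.1.1.2 j]
  have hW' := sum_update_add (fun _ => testWelfare q fun _ => 1) T a t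
  have hf := sum_update_add (fun _ s => #s * indexSum s) T a t
  have hle := hT.potential_le hfeas (by unfold noWelfare; linarith)
  simp only [potential, Prod.Lex.toLex_le_toLex] at hle
  omega

lemma add_revIndexSum_le (hT : IsLeastOptimal q G T) {a b : Fin B} (hab : a ≠ b)
    {X Y : Finset (Fin n)} (hXY : Disjoint X Y) (hX : X ⊆ T a ∪ T b) (hY : Y ⊆ T a ∪ T b)
    (hXG : #X ≤ G) (hYG : #Y ≤ G)
    (hW : testWelfare q (fun _ => 1) (T a) + testWelfare q (fun _ => 1) (T b) ≤
      testWelfare q (fun _ => 1) X + testWelfare q (fun _ => 1) Y)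
    (hf : #X * indexSum X + #Y * indexSum Y ≤ #(T a) * indexSum (T a) + #(T b) * indexSum (T b)) :
    ((a : ℕ) + 1) * revIndexSum (T a) + ((b : ℕ) + 1) * revIndexSum (T b) ≤
      ((a : ℕ) + 1) * revIndexSum X + ((b : ℕ) + 1) * revIndexSum Y := by
  have hfeas : IsFeasible G (Function.update (Function.update T a X) b Y) := by
    refine ⟨pairwise_disjoint_update_update hT.1.1.1 hab hXY hX hY, fun j => ?_⟩
    simp only [Function.update_apply]
    split_ifs
    exacts [hYG, hXG, hT.1.1.2 j]
  have hW' := sum_update_update_add (fun _ => testWelfare q fun _ => 1) T hab X Y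
  have hf' := sum_update_update_add (fun _ s => #s * indexSum s) T hab X Y
  have hh := sum_update_update_add (fun (j : Fin B) s => ((j : ℕ) + 1) * revIndexSum s) T hab X Y
  have hle := hT.potential_le hfeas (by unfold noWelfare; linarith)
  simp only [potential, Prod.Lex.toLex_le_toLex] at hle
  omega

lemma one_sub_inv_card_lt (hT : IsLeastOptimal q G T) (hq : ∀ i, 0 ≤ q i) {a : Fin B}
    {i : Fin n} (hi : i ∈ T a) : 1 - 1 / (#(T a) : ℝ) < q i := by
  refine one_sub_inv_card_lt_of_erase hi (fun j _ => hq j) ?_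
  rw [← testWelfare_one, ← testWelfare_one]
  by_contra! hW
  have hle := hT.card_mul_indexSum_le
    (fun j hj => (hT.1.1.1 (Ne.symm hj)).mono_left (erase_subset i (T a)))
    ((card_le_card (erase_subset i (T a))).trans (hT.1.1.2 a)) hW
  have hlt : #((T a).erase i) * indexSum ((T a).erase i) < #(T a) * indexSum (T a) :=
    Nat.mul_lt_mul_of_lt_of_le (card_erase_lt_of_mem hi)
      (sum_le_sum_of_subset (erase_subset i (T a)))
      (sum_pos (fun _ _ => Nat.succ_pos _) ⟨i, hi⟩)
  omega

lemma lt_of_mem_of_forall_notMem (hT : IsLeastOptimal q G T) (hq : ∀ i, 0 ≤ q i)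
    (hsort : ∀ i j : Fin n, i ≤ j → q j ≤ q i) {a : Fin B} {x y : Fin n} (hx : x ∈ T a)
    (hy : ∀ j, y ∉ T j) : x < y := by
  by_contra! hyx
  have hyx : y < x := lt_of_le_of_ne hyx fun h => hy a (h ▸ hx)
  have hyt : y ∉ (T a).erase x := fun h => hy a (mem_of_mem_erase h)
  set t := insert y ((T a).erase x)
  have hcard : #t = #(T a) := by
    rw [card_insert_of_notMem hyt, card_erase_add_one hx]
  have hle := hT.card_mul_indexSum_le (t := t)
    (fun j hj => disjoint_insert_left.2
      ⟨hy j, (hT.1.1.1 (Ne.symm hj)).mono_left (erase_subset x (T a))⟩)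
    (hcard ▸ hT.1.1.2 a) (by
      rw [testWelfare_one, testWelfare_one, hcard, prod_insert hyt,
        ← mul_prod_erase _ _ hx]
      gcongr
      · exact prod_nonneg fun j _ => hq j
      · exact hsort y x hyx.le)
  have hsum : indexSum t < indexSum (T a) := by
    unfold indexSum
    rw [sum_insert hyt, ← add_sum_erase _ _ hx]
    have : (y : ℕ) < x := hyx
    omega
  rw [hcard] at hle
  exact absurd hle (not_le.2 (Nat.mul_lt_mul_of_pos_left hsum (card_pos.2 ⟨x, hx⟩)))

lemma card_le_and_lt_of_lt (hT : IsLeastOptimal q G T) (hq : ∀ i, 0 ≤ q i)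
    (hsort : ∀ i j : Fin n, i ≤ j → q j ≤ q i) {a b : Fin B} (hab : a < b) :
    #(T b) ≤ #(T a) ∧ ∀ x ∈ T a, ∀ y ∈ T b, x < y := by
  have hdisj : Disjoint (T a) (T b) := hT.1.1.1 hab.ne
  have hS : #(T a ∪ T b) = #(T a) + #(T b) := card_union_of_disjoint hdisj
  obtain ⟨X, hX, hXcard⟩ := exists_isInitialIn (T a ∪ T b) (k := max #(T a) #(T b)) (by omega)
  suffices hXa : X = T a by
    subst hXa
    exact ⟨by omega, fun x hx y hy =>
      hX.2 x hx y (mem_union_right _ hy) (disjoint_right.1 hdisj hy)⟩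
  by_contra hXa
  have hC3 : ∀ c, ∀ i ∈ T c, 1 - 1 / (#(T c) : ℝ) ≤ q i := fun c i hi =>
    (hT.one_sub_inv_card_lt hq hi).le
  obtain ⟨hW, hf⟩ : testWelfare q (fun _ => 1) (T a) + testWelfare q (fun _ => 1) (T b) ≤
        testWelfare q (fun _ => 1) X + testWelfare q (fun _ => 1) ((T a ∪ T b) \ X) ∧
      #X * indexSum X + #((T a ∪ T b) \ X) * indexSum ((T a ∪ T b) \ X) ≤
        #(T a) * indexSum (T a) + #(T b) * indexSum (T b) := by
    rcases le_total #(T b) #(T a) with h | h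
    · exact repool_le hq hsort hdisj h hX (by omega) (hC3 a)
    · rw [union_comm] at hX ⊢
      have := repool_le hq hsort hdisj.symm h hX (by omega) (hC3 b)
      exact ⟨by linarith [this.1], by omega⟩
  have hh := hT.add_revIndexSum_le hab.ne disjoint_sdiff hX.1 sdiff_subset
    (by rw [hXcard]; exact max_le (hT.1.1.2 a) (hT.1.1.2 b))
    (by rw [card_sdiff_of_subset hX.1, hS, hXcard]; have := hT.1.1.2 a; omega) hW hf
  have hlt : revIndexSum (T a) < revIndexSum X :=
    hX.sum_lt_sum strictAnti_sub_val (fun i => Nat.sub_pos_of_lt i.isLt)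
      subset_union_left (by omega) (Ne.symm hXa)
  have hsplit : revIndexSum ((T a ∪ T b) \ X) + revIndexSum X =
      revIndexSum (T a) + revIndexSum (T b) := by
    unfold revIndexSum
    rw [sum_sdiff hX.1, sum_union hdisj]
  have hab' : (a : ℕ) < b := hab
  nlinarith

end IsLeastOptimal

section Intervals

variable {n B : ℕ}

lemma card_filter_val_mem_Ico_le (P s : ℕ) :
    #(univ.filter fun i : Fin n => P ≤ (i : ℕ) ∧ (i : ℕ) < P + s) ≤ s :=
  calc _ ≤ #(Ico P (P + s)) :=
        card_le_card_of_injOn Fin.val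
          (fun i hi => by simpa using (mem_filter.1 hi).2) Fin.val_injective.injOn
    _ = s := by simp

lemma mem_iff_of_ordered {T : Fin B → Finset (Fin n)} (hdisj : Pairwise (Disjoint on T))
    (htested : ∀ a, ∀ x ∈ T a, ∀ y, (∀ j, y ∉ T j) → x < y)
    (hord : ∀ a b, a < b → ∀ x ∈ T a, ∀ y ∈ T b, x < y) (j : Fin B) (i : Fin n) :
    i ∈ T j ↔
      (∑ k ∈ univ.filter fun k => k < j, #(T k)) ≤ (i : ℕ) ∧
        (i : ℕ) < (∑ k ∈ univ.filter fun k => k < j, #(T k)) + #(T j) := by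
  set P := ∑ k ∈ univ.filter fun k => k < j, #(T k)
  set L := (univ.filter fun k => k < j).biUnion T
  have hL : #L = P := card_biUnion fun k _ l _ hkl => hdisj hkl
  have hmem : ∀ i ∈ T j, P ≤ (i : ℕ) ∧ (i : ℕ) < P + #(T j) := by
    intro i hi
    have hLi : L ⊆ Iio i := by
      intro x hx
      obtain ⟨k, hk, hxk⟩ := mem_biUnion.1 hx
      exact mem_Iio.2 (hord k j (mem_filter.1 hk).2 x hxk i hi)
    have hIi : Iio i ⊆ L ∪ (T j).filter (· < i) := by
      intro x hx
      rw [mem_Iio] at hx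
      obtain ⟨k, hxk⟩ : ∃ k, x ∈ T k := by
        by_contra! h
        exact lt_asymm hx (htested j i hi x h)
      rcases lt_trichotomy k j with hkj | rfl | hjk
      · exact mem_union_left _ (mem_biUnion.2 ⟨k, by simpa using hkj, hxk⟩)
      · exact mem_union_right _ (mem_filter.2 ⟨hxk, hx⟩)
      · exact absurd (hord j k hjk i hi x hxk) (lt_asymm hx)
    have hF : #((T j).filter (· < i)) < #(T j) :=
      card_lt_card (filter_ssubset.2 ⟨i, hi, lt_irrefl i⟩)
    have h₁ := card_le_card hLi
    have h₂ := (card_le_card hIi).trans (card_union_le _ _)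
    rw [Fin.card_Iio] at h₁ h₂
    omega
  refine ⟨hmem i, fun hi => ?_⟩
  have hsub : T j ⊆ univ.filter fun i : Fin n => P ≤ (i : ℕ) ∧ (i : ℕ) < P + #(T j) :=
    fun x hx => mem_filter.2 ⟨mem_univ x, hmem x hx⟩
  rw [eq_of_subset_of_card_le hsub (card_filter_val_mem_Ico_le P _)]
  exact mem_filter.2 ⟨mem_univ i, hi⟩

end Intervals

/-- With identical utilities and individuals sorted by decreasing healthy-probability,
some optimal non-overlapping regime consists of consecutive intervals of individuals,
with test sizes ordered decreasingly. -/
theorem stmt14 {n B G : ℕ} (q : Fin n → ℝ)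
    (hq : ∀ i, 0 ≤ q i ∧ q i ≤ 1) (hsort : ∀ i j : Fin n, i ≤ j → q j ≤ q i) :
    ∃ T : Fin B → Finset (Fin n),
      (∀ j k, j ≠ k → Disjoint (T j) (T k)) ∧ (∀ j, (T j).card ≤ G) ∧
      (∀ T' : Fin B → Finset (Fin n),
        (∀ j k, j ≠ k → Disjoint (T' j) (T' k)) → (∀ j, (T' j).card ≤ G) →
          noWelfare q (fun _ => 1) T' ≤ noWelfare q (fun _ => 1) T) ∧
      (∀ j k : Fin B, j ≤ k → (T k).card ≤ (T j).card) ∧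
      (∀ j : Fin B, ∀ i : Fin n,
        i ∈ T j ↔
          (∑ k ∈ Finset.univ.filter fun k => k < j, (T k).card) ≤ (i : ℕ) ∧
            (i : ℕ) <
              (∑ k ∈ Finset.univ.filter fun k => k < j, (T k).card) + (T j).card) := by
  have hq₀ : ∀ i, 0 ≤ q i := fun i => (hq i).1
  obtain ⟨T, hT⟩ := exists_isLeastOptimal (B := B) q G
  have hord := fun a b (hab : a < b) => hT.card_le_and_lt_of_lt hq₀ hsort hab
  refine ⟨T, fun j k h => hT.1.1.1 h, hT.1.1.2,
    fun T' hdisj hcard => hT.1.2 T' ⟨fun j k h => hdisj j k h, hcard⟩, fun j k hjk => ?_,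
    mem_iff_of_ordered hT.1.1.1 (fun a x hx y hy => hT.lt_of_mem_of_forall_notMem hq₀ hsort hx hy)
      fun a b hab => (hord a b hab).2⟩
  rcases hjk.lt_or_eq with h | rfl
  · exact (hord j k h).1
  · exact le_rfl
end
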